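/- arXiv:math/0007087 — 10 statements merged into one kernel-verified Lean document; each statement's English description precedes it below -/
import Mathlib

section
/- Every locally indicable group is left orderable. -/
/-- `r` is a left-invariant linear order on the group `G`. -/
def IsLeftOrder {G : Type*} [Group G] (r : G → G → Prop) : Prop :=
  IsLinearOrder G r ∧ ∀ g x y : G, r x y → r (g * x) (g * y)

/-- A group is left orderable if it admits a left-invariant linear order. -/
def LeftOrderable (G : Type*) [Group G] : Prop :=
  ∃ r : G → G → Prop, IsLeftOrder r

/-- The subgroup `K` is convex with respect to the order `r` on `G`. -/
def IsConvexWrt {G : Type*} [Group G] (r : G → G → Prop) (K : Subgroup G) : Prop :=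
  ∀ j g k : G, j ∈ K → k ∈ K → r j g → r g k → g ∈ K

/-- A subgroup is left-relatively convex if it is convex with respect to
some left order on the group. -/
def LeftRelConvex {G : Type*} [Group G] (K : Subgroup G) : Prop :=
  ∃ r : G → G → Prop, IsLeftOrder r ∧ IsConvexWrt r K

/-- A group is locally indicable if every nontrivial finitely generated
subgroup has an infinite cyclic quotient. -/
def LocallyIndicable (G : Type*) [Group G] : Prop :=
  ∀ H : Subgroup G, H.FG → H ≠ ⊥ →
    ∃ φ : H →* Multiplicative ℤ, Function.Surjective φ

open scoped Classical in
/-- Burns–Hale key lemma: for any finite set of nontrivial elements of a locally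
indicable group there is a choice of signs such that the subsemigroup generated by
the signed elements avoids `1`. -/
lemma burnsHale_key {G : Type*} [Group G] (h : LocallyIndicable G) :
    ∀ (n : ℕ) (F : Finset G), F.card ≤ n → (∀ g ∈ F, g ≠ 1) →
      ∃ ε : G → Bool,
        (1 : G) ∉ Subsemigroup.closure ((fun g => if ε g then g else g⁻¹) '' (F : Set G)) := by
  intro n
  induction n with
  | zero =>
    intro F hcard _
    have hFe : F = ∅ := Finset.card_eq_zero.mp (Nat.le_zero.mp hcard)
    subst hFe
    refine ⟨fun _ => true, ?_⟩
    simp [Subsemigroup.closure_empty]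
    exact Subsemigroup.notMem_bot
  | succ n ih =>
    intro F hcard hne
    by_cases hFe : F = ∅
    · subst hFe
      refine ⟨fun _ => true, ?_⟩
      simp [Subsemigroup.closure_empty]
      exact Subsemigroup.notMem_bot
    set H := Subgroup.closure (F : Set G) with hH
    have hFG : H.FG := ⟨F, rfl⟩
    have hFH : ∀ g ∈ F, g ∈ H := fun g hg => Subgroup.subset_closure hg
    have hHne : H ≠ ⊥ := by
      obtain ⟨g, hg⟩ := Finset.nonempty_iff_ne_empty.mpr hFe
      intro hb
      have hgH : g ∈ H := hFH g hg
      rw [hb, Subgroup.mem_bot] at hgH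
      exact hne g hg hgH
    obtain ⟨φ, hφ⟩ := h H hFG hHne
    set f : G → ℤ := fun g => if hg : g ∈ H then Multiplicative.toAdd (φ ⟨g, hg⟩) else 0 with hf
    have fmem : ∀ (g : G) (hg : g ∈ H), f g = Multiplicative.toAdd (φ ⟨g, hg⟩) := by
      intro g hg; simp [hf, hg]
    have fmul : ∀ x y : G, x ∈ H → y ∈ H → f (x * y) = f x + f y := by
      intro x y hx hy
      rw [fmem x hx, fmem y hy, fmem (x * y) (mul_mem hx hy)]
      have : (⟨x * y, mul_mem hx hy⟩ : H) = ⟨x, hx⟩ * ⟨y, hy⟩ := rfl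
      rw [this, map_mul, toAdd_mul]
    have finv : ∀ x : G, x ∈ H → f x⁻¹ = -f x := by
      intro x hx
      rw [fmem x hx, fmem x⁻¹ (inv_mem hx)]
      have : (⟨x⁻¹, inv_mem hx⟩ : H) = (⟨x, hx⟩)⁻¹ := rfl
      rw [this, map_inv, toAdd_inv]
    have f1 : f (1 : G) = 0 := by
      rw [fmem 1 (one_mem H)]
      have : (⟨(1 : G), one_mem H⟩ : H) = 1 := rfl
      rw [this, map_one, toAdd_one]
    -- some generator has nonzero image
    have hF₁ : ∃ g ∈ F, f g ≠ 0 := by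
      by_contra hall
      push_neg at hall
      set K : Subgroup G := Subgroup.map H.subtype φ.ker with hK
      have hsub : (F : Set G) ⊆ (K : Set G) := by
        intro g hg
        refine ⟨⟨g, hFH g hg⟩, ?_, rfl⟩
        have := hall g hg
        rw [fmem g (hFH g hg)] at this
        exact MonoidHom.mem_ker.mpr (by
          have : Multiplicative.toAdd (φ ⟨g, hFH g hg⟩) = 0 := this
          exact Multiplicative.toAdd.injective (by simpa using this))
      have hHK : H ≤ K := by rw [hH]; exact Subgroup.closure_le K |>.mpr hsub
      obtain ⟨x, hx⟩ := hφ (Multiplicative.ofAdd 1)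
      obtain ⟨y, hy, hyx⟩ := hHK x.2
      have : y = x := Subtype.ext hyx
      subst this
      simp only [SetLike.mem_coe, MonoidHom.mem_ker] at hy
      rw [hy] at hx
      have : (0 : ℤ) = 1 := by simpa using congrArg Multiplicative.toAdd hx
      omega
    obtain ⟨g₁, hg₁F, hg₁⟩ := hF₁
    set F₀ : Finset G := F.filter (fun g => f g = 0) with hF₀
    have hF₀sub : F₀ ⊆ F := Finset.filter_subset _ _
    have hF₀lt : F₀.card < F.card := by
      refine Finset.card_lt_card ⟨hF₀sub, fun hsub' => ?_⟩
      have := hsub' hg₁F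
      rw [hF₀, Finset.mem_filter] at this
      exact hg₁ this.2
    obtain ⟨ε₀, hε₀⟩ := ih F₀ (by omega) (fun g hg => hne g (hF₀sub hg))
    set ε : G → Bool := fun g => if f g = 0 then ε₀ g else decide (0 < f g) with hε
    refine ⟨ε, ?_⟩
    intro hmem
    set S₀ : Set G := (fun g => if ε₀ g then g else g⁻¹) '' (F₀ : Set G) with hS₀
    have main : ∀ (x : G), x ∈ Subsemigroup.closure
          ((fun g => if ε g then g else g⁻¹) '' (F : Set G)) →
        x ∈ H ∧ 0 ≤ f x ∧ (f x = 0 → x ∈ Subsemigroup.closure S₀) := by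
      intro x hx
      induction hx using Subsemigroup.closure_induction with
      | mem x hxS =>
        obtain ⟨g, hgF, rfl⟩ := hxS
        beta_reduce
        have hgF' : g ∈ F := hgF
        have hgH := hFH g hgF'
        by_cases h0 : f g = 0
        · have hgF₀ : g ∈ F₀ := Finset.mem_filter.mpr ⟨hgF', h0⟩
          have hεeq : ε g = ε₀ g := by rw [hε]; simp [h0]
          rw [hεeq]
          have hxS₀ : (if ε₀ g then g else g⁻¹) ∈ S₀ := Set.mem_image_of_mem _ hgF₀
          constructor
          · cases ε₀ g <;> simp [hgH, inv_mem hgH]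
          constructor
          · cases ε₀ g <;> simp [h0, finv g hgH]
          · intro _; exact Subsemigroup.subset_closure hxS₀
        · have hεeq : ε g = decide (0 < f g) := by rw [hε]; simp [h0]
          have hpos : 0 < f (if ε g then g else g⁻¹) := by
            rw [hεeq]
            rcases lt_or_gt_of_ne h0 with hlt | hgt
            · have : decide (0 < f g) = false := by simp; omega
              rw [this]; simp only [Bool.false_eq_true, if_false]
              rw [finv g hgH]; omega
            · have : decide (0 < f g) = true := by simp [hgt]
              rw [this]; simpa using hgt
          refine ⟨?_, le_of_lt hpos, fun hz => absurd hz (by omega)⟩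
          cases ε g <;> simp [hgH, inv_mem hgH]
      | mul x y hx' hy' px py =>
        obtain ⟨hxH, hx0, hxz⟩ := px
        obtain ⟨hyH, hy0, hyz⟩ := py
        refine ⟨mul_mem hxH hyH, ?_, ?_⟩
        · rw [fmul x y hxH hyH]; omega
        · intro hz
          rw [fmul x y hxH hyH] at hz
          exact mul_mem (hxz (by omega)) (hyz (by omega))
    obtain ⟨-, -, himp⟩ := main 1 hmem
    exact hε₀ (himp f1)

theorem locallyIndicable_leftOrderable (G : Type*) [Group G]
    (h : LocallyIndicable G) : LeftOrderable G := by
  classical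
  have key : ∀ F : Finset G, ∃ ε : G → Bool,
      (1 : G) ∉ Subsemigroup.closure
        ((fun g => if ε g then g else g⁻¹) '' ((F.erase 1 : Finset G) : Set G)) := by
    intro F
    exact burnsHale_key h (F.erase 1).card (F.erase 1) le_rfl
      (fun g hg => Finset.ne_of_mem_erase hg)
  choose ε hε using key
  obtain ⟨U, hU⟩ := (Filter.atTop : Filter (Finset G)).exists_ultrafilter_le
  -- membership of "eventually contains g" sets
  have hcontains : ∀ g : G, {F : Finset G | g ∈ F} ∈ U := by
    intro g
    refine hU (Filter.mem_of_superset (Filter.mem_atTop ({g} : Finset G)) ?_)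
    intro F hF
    exact Finset.singleton_subset_iff.mp hF
  have hcontains' : ∀ g : G, g ≠ 1 → {F : Finset G | g ∈ F.erase 1} ∈ U := by
    intro g hg
    refine Filter.mem_of_superset (hcontains g) ?_
    intro F hF
    exact Finset.mem_erase.mpr ⟨hg, hF⟩
  set Q : Finset G → G → Prop := fun F g => g ∈ F.erase 1 ∧ ε F g = true with hQ
  set P : Set G := {g | g ≠ 1 ∧ {F : Finset G | Q F g} ∈ U} with hP
  -- signed elements belong to the signed generating set
  have hsgn : ∀ (F : Finset G) (g : G), g ∈ F.erase 1 →
      (if ε F g then g else g⁻¹) ∈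
        ((fun g => if ε F g then g else g⁻¹) '' ((F.erase 1 : Finset G) : Set G)) :=
    fun F g hg => Set.mem_image_of_mem _ hg
  have hsgnT : ∀ (F : Finset G) (g : G), g ∈ F.erase 1 → ε F g = true →
      g ∈ ((fun g => if ε F g then g else g⁻¹) '' ((F.erase 1 : Finset G) : Set G)) := by
    intro F g hg ht
    simpa [ht] using hsgn F g hg
  have hsgnF : ∀ (F : Finset G) (g : G), g ∈ F.erase 1 → ε F g = false →
      g⁻¹ ∈ ((fun g => if ε F g then g else g⁻¹) '' ((F.erase 1 : Finset G) : Set G)) := by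
    intro F g hg ht
    simpa [ht] using hsgn F g hg
  -- two positives cannot be mutually inverse
  have haux : ∀ g k : G, g ∈ P → k ∈ P → g * k ≠ 1 := by
    rintro g k ⟨hg1, hgU⟩ ⟨hk1, hkU⟩ hcontra
    have hA : {F : Finset G | Q F g} ∩ {F | Q F k} ∈ U := Filter.inter_mem hgU hkU
    obtain ⟨F, hFg, hFk⟩ := U.nonempty_of_mem hA
    have h1 := mul_mem (Subsemigroup.subset_closure (hsgnT F g hFg.1 hFg.2))
      (Subsemigroup.subset_closure (hsgnT F k hFk.1 hFk.2))
    rw [hcontra] at h1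
    exact hε F h1
  -- closure of P under multiplication
  have hmul : ∀ g k : G, g ∈ P → k ∈ P → g * k ∈ P := by
    intro g k hg hk
    have hne : g * k ≠ 1 := haux g k hg hk
    refine ⟨hne, ?_⟩
    have hB : ({F : Finset G | Q F g} ∩ {F | Q F k} ∩ {F | g * k ∈ F.erase 1}) ∈ U :=
      Filter.inter_mem (Filter.inter_mem hg.2 hk.2) (hcontains' _ hne)
    refine Filter.mem_of_superset hB ?_
    rintro F ⟨⟨hFg, hFk⟩, hFgk⟩
    refine ⟨hFgk, ?_⟩
    by_contra hfalse
    have hf : ε F (g * k) = false := by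
      cases hb : ε F (g * k)
      · rfl
      · exact absurd hb hfalse
    have h1 := mul_mem
      (mul_mem (Subsemigroup.subset_closure (hsgnT F g hFg.1 hFg.2))
        (Subsemigroup.subset_closure (hsgnT F k hFk.1 hFk.2)))
      (Subsemigroup.subset_closure (hsgnF F (g * k) hFgk hf))
    have heq : g * k * (g * k)⁻¹ = 1 := by group
    rw [heq] at h1
    exact hε F h1
  -- totality
  have htotal : ∀ g : G, g ≠ 1 → g ∈ P ∨ g⁻¹ ∈ P := by
    intro g hg
    have hginv : g⁻¹ ≠ 1 := by simpa using hg
    have hC : ({F : Finset G | g ∈ F.erase 1} ∩ {F | g⁻¹ ∈ F.erase 1}) ∈ U :=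
      Filter.inter_mem (hcontains' g hg) (hcontains' g⁻¹ hginv)
    have hsplit : ({F : Finset G | g ∈ F.erase 1} ∩ {F | g⁻¹ ∈ F.erase 1})
        ⊆ {F | Q F g} ∪ {F | Q F g⁻¹} := by
      rintro F ⟨hFg, hFgi⟩
      cases hb : ε F g
      · -- if ε F g⁻¹ were false we would get 1 in the closure
        right
        refine ⟨hFgi, ?_⟩
        cases hb' : ε F g⁻¹
        · exfalso
          have h1 := mul_mem (Subsemigroup.subset_closure (hsgnF F g hFg hb))
            (Subsemigroup.subset_closure (hsgnF F g⁻¹ hFgi hb'))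
          have heq : g⁻¹ * (g⁻¹)⁻¹ = 1 := by group
          rw [heq] at h1
          exact hε F h1
        · rfl
      · left; exact ⟨hFg, hb⟩
    have hUnion : ({F : Finset G | Q F g} ∪ {F | Q F g⁻¹}) ∈ U :=
      Filter.mem_of_superset hC hsplit
    rcases Ultrafilter.union_mem_iff.mp hUnion with hh | hh
    · exact Or.inl ⟨hg, hh⟩
    · exact Or.inr ⟨hginv, hh⟩
  -- define the order
  refine ⟨fun x y => x = y ∨ x⁻¹ * y ∈ P, ⟨?_, ?_⟩⟩
  · refine { refl := fun a => Or.inl rfl, trans := ?_, antisymm := ?_, total := ?_ }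
    · rintro a b c (rfl | hab) h2
      · exact h2
      · rcases h2 with rfl | hbc
        · exact Or.inr hab
        · right
          have : a⁻¹ * c = (a⁻¹ * b) * (b⁻¹ * c) := by group
          rw [this]
          exact hmul _ _ hab hbc
    · rintro a b (rfl | hab) h2
      · rfl
      · rcases h2 with rfl | hba
        · rfl
        · exfalso
          exact haux _ _ hab hba (by group)
    · intro a b
      by_cases hab : a = b
      · exact Or.inl (Or.inl hab)
      · have hne : a⁻¹ * b ≠ 1 := by
          intro hc
          exact hab (by rw [← mul_one a, ← hc]; group)
        rcases htotal _ hne with hh | hh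
        · exact Or.inl (Or.inr hh)
        · refine Or.inr (Or.inr ?_)
          have : (a⁻¹ * b)⁻¹ = b⁻¹ * a := by group
          rwa [this] at hh
  · rintro g x y (rfl | hxy)
    · exact Or.inl rfl
    · right
      have : (g * x)⁻¹ * (g * y) = x⁻¹ * y := by group
      rwa [this]
end

section
/- If G is a left ordered group and ℬ is a set of left-relatively convex subgroups of G, then the intersection of all members of ℬ is a left-relatively convex subgroup of G. -/
/-!
A subgroup `H` of a left-orderable group `G` is left-relatively convex as soon as `G` acts on a
linear order `X` by order automorphisms and `H` is the stabilizer of a point `x`: compare `a` and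
`b` by `a • x` and `b • x`, breaking ties by a left order of `G`. Conversely, the cosets of a
convex subgroup `H` are intervals, so the left order induces a `G`-invariant linear order on
`G ⧸ H`. Well-ordering `B`, the lexicographic product of the ordered `G ⧸ H`, `H ∈ B`, is again
a linear order preserved by `G`, and the stabilizer of the point `(H)_{H ∈ B}` is `⋂ B`.
-/

namespace IsLeftOrder

variable {G : Type*} [Group G] {r : G → G → Prop} {H : Subgroup G}

theorem rel_mul_of_one_rel (hr : IsLeftOrder r) (hH : IsConvexWrt r H) {b h h' : G}
    (hb : b ∉ H) (h1b : r 1 b) (hh : h ∈ H) (hh' : h' ∈ H) : r h (b * h') := by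
  refine (hr.1.total h (b * h')).resolve_right fun hbh => ?_
  rcases hr.1.total 1 (b * h') with h1 | h1
  · exact hb <| by simpa using mul_mem (hH _ _ _ H.one_mem hh h1 hbh) (inv_mem hh')
  · have hb' : r h' b⁻¹ := by simpa using hr.2 b⁻¹ _ _ h1
    have hb'' : r b⁻¹ 1 := by simpa using hr.2 b⁻¹ _ _ h1b
    exact hb <| inv_mem_iff.1 (hH _ _ _ hh' H.one_mem hb' hb'')

theorem rel_of_mk_eq_of_mk_eq (hr : IsLeftOrder r) (hH : IsConvexWrt r H) {a b a' b' : G}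
    (hab : r a b) (hne : (a : G ⧸ H) ≠ b) (ha : (a : G ⧸ H) = a') (hb : (b : G ⧸ H) = b') :
    r a' b' := by
  rw [Ne, QuotientGroup.eq] at hne
  rw [QuotientGroup.eq] at ha hb
  have h1 : r 1 (a⁻¹ * b) := by simpa using hr.2 a⁻¹ _ _ hab
  have := hr.2 a _ _ (hr.rel_mul_of_one_rel hH hne h1 ha hb)
  simpa [mul_assoc] using this

end IsLeftOrder

section

variable {G : Type*} [Group G]

@[reducible] noncomputable def cosetLinearOrder {r : G → G → Prop} (hr : IsLinearOrder G r)
    (H : Subgroup G) : LinearOrder (G ⧸ H) where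
  le p q := r p.out q.out
  le_refl p := hr.refl _
  le_trans p q s := hr.trans _ _ _
  le_antisymm p q h₁ h₂ := Quotient.out_injective (hr.antisymm _ _ h₁ h₂)
  le_total p q := hr.total _ _
  toDecidableLE := Classical.decRel _

theorem LeftRelConvex.exists_linearOrder_strictMono_smul {H : Subgroup G} (hH : LeftRelConvex H) :
    ∃ _ : LinearOrder (G ⧸ H), ∀ g : G, StrictMono (g • · : G ⧸ H → G ⧸ H) := by
  obtain ⟨r, hr, hconv⟩ := hH
  let := cosetLinearOrder hr.1 H
  refine ⟨inferInstance, fun g => Monotone.strictMono_of_injective ?_ (MulAction.injective g)⟩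
  intro p q hpq
  by_cases hne : p = q
  · rw [hne]
  · have hmk (p : G ⧸ H) : ((g * p.out : G) : G ⧸ H) = g • p := by
      rw [← smul_eq_mul, ← MulAction.Quotient.smul_mk, QuotientGroup.out_eq']
    show r (g • p).out (g • q).out
    refine hr.rel_of_mk_eq_of_mk_eq hconv (hr.2 g _ _ hpq) ?_ ?_ ?_
    · rwa [hmk, hmk, Ne, smul_left_cancel_iff]
    all_goals rw [hmk, QuotientGroup.out_eq']

section Orbit

variable {X : Type*} [MulAction G X] [LinearOrder X]

def orbitLexRel (x : X) (r₀ : G → G → Prop) (a b : G) : Prop :=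
  a • x < b • x ∨ a • x = b • x ∧ r₀ a b

theorem isLinearOrder_orbitLexRel {r₀ : G → G → Prop} (hr₀ : IsLinearOrder G r₀) (x : X) :
    IsLinearOrder G (orbitLexRel x r₀) where
  refl a := .inr ⟨rfl, hr₀.refl a⟩
  trans a b c := by
    rintro (hab | ⟨hab, hab'⟩) (hbc | ⟨hbc, hbc'⟩)
    · exact .inl (hab.trans hbc)
    · exact .inl (hbc ▸ hab)
    · exact .inl (hab ▸ hbc)
    · exact .inr ⟨hab.trans hbc, hr₀.trans _ _ _ hab' hbc'⟩
  antisymm a b := by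
    rintro (hab | ⟨hab, hab'⟩) (hba | ⟨hba, hba'⟩)
    · exact (hab.asymm hba).elim
    · exact (hab.ne hba.symm).elim
    · exact (hba.ne hab.symm).elim
    · exact hr₀.antisymm _ _ hab' hba'
  total a b := by
    rcases lt_trichotomy (a • x) (b • x) with h | h | h
    · exact .inl (.inl h)
    · exact (hr₀.total a b).imp (fun h' => .inr ⟨h, h'⟩) (fun h' => .inr ⟨h.symm, h'⟩)
    · exact .inr (.inl h)

theorem isLeftOrder_orbitLexRel {r₀ : G → G → Prop} (hr₀ : IsLeftOrder r₀)
    (hX : ∀ g : G, StrictMono (g • · : X → X)) (x : X) : IsLeftOrder (orbitLexRel x r₀) := by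
  refine ⟨isLinearOrder_orbitLexRel hr₀.1 x, fun g a b hab => ?_⟩
  simp only [orbitLexRel, mul_smul] at hab ⊢
  exact hab.imp (fun h => hX g h) fun h => ⟨congrArg (g • ·) h.1, hr₀.2 g a b h.2⟩

theorem isConvexWrt_orbitLexRel_stabilizer (r₀ : G → G → Prop) (x : X) :
    IsConvexWrt (orbitLexRel x r₀) (MulAction.stabilizer G x) := by
  intro j g k hj hk hjg hgk
  rw [MulAction.mem_stabilizer_iff] at hj hk ⊢
  rw [orbitLexRel, hj] at hjg
  rw [orbitLexRel, hk] at hgk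
  rcases hjg with hjg | ⟨hjg, -⟩
  · rcases hgk with hgk | ⟨hgk, -⟩
    · exact (hjg.asymm hgk).elim
    · exact hgk
  · exact hjg.symm

theorem leftRelConvex_stabilizer (hG : LeftOrderable G) (hX : ∀ g : G, StrictMono (g • · : X → X))
    (x : X) : LeftRelConvex (MulAction.stabilizer G x) :=
  let ⟨r₀, hr₀⟩ := hG
  ⟨_, isLeftOrder_orbitLexRel hr₀ hX x, isConvexWrt_orbitLexRel_stabilizer r₀ x⟩

end Orbit

section Lex

variable {ι : Type*} {X : ι → Type*} [∀ i, MulAction G (X i)]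

theorem Pi.Lex.strictMono_smul [LinearOrder ι] [∀ i, PartialOrder (X i)]
    (hX : ∀ i (g : G), StrictMono (g • · : X i → X i)) (g : G) :
    StrictMono (g • · : Lex (∀ i, X i) → Lex (∀ i, X i)) := by
  rintro x y ⟨i, hlt, hi⟩
  exact ⟨i, fun j hj => congrArg (g • ·) (hlt j hj), hX i g hi⟩

theorem MulAction.stabilizer_toLex_pi (x : ∀ i, X i) :
    MulAction.stabilizer G (toLex x) = ⨅ i, MulAction.stabilizer G (x i) := by
  ext g
  simp only [Subgroup.mem_iInf, MulAction.mem_stabilizer_iff]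
  exact funext_iff

end Lex

end

theorem sInf_leftRelConvex {G : Type*} [Group G] (hG : LeftOrderable G)
    (B : Set (Subgroup G)) (hB : ∀ H ∈ B, LeftRelConvex H) :
    LeftRelConvex (sInf B) := by
  obtain ⟨_, _⟩ := exists_wellFoundedLT B
  choose ord hord using fun H : B => (hB H H.2).exists_linearOrder_strictMono_smul
  have := leftRelConvex_stabilizer hG (Pi.Lex.strictMono_smul hord)
    (toLex fun H : B => ((1 : G) : G ⧸ (H : Subgroup G)))
  rwa [MulAction.stabilizer_toLex_pi, iInf_congr fun H => MulAction.stabilizer_quotient _,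
    ← sInf_eq_iInf'] at this
end

section
/- If G is a left ordered group and ℬ is a nonempty chain (totally ordered by inclusion) of left-relatively convex subgroups of G, then the union of all members of ℬ is a left-relatively convex subgroup of G. -/
theorem union_chain_leftRelConvex {G : Type*} [Group G] (hG : LeftOrderable G)
    (B : Set (Subgroup G)) (hne : B.Nonempty)
    (hchain : IsChain (· ≤ ·) B)
    (hB : ∀ H ∈ B, LeftRelConvex H)
    (U : Subgroup G) (hU : (U : Set G) = ⋃ H ∈ B, (H : Set G)) :
    LeftRelConvex U := by
  classical
  obtain ⟨H₀, hH₀⟩ := hne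
  haveI : Nonempty B := ⟨⟨H₀, hH₀⟩⟩
  haveI hdir : IsDirected B (· ≤ ·) := by
    constructor
    intro a b
    rcases hchain.directedOn a.1 a.2 b.1 b.2 with ⟨c, hc, hac, hbc⟩
    exact ⟨⟨c, hc⟩, hac, hbc⟩
  haveI : (Filter.atTop : Filter B).NeBot :=
    Filter.atTop_neBot_iff.2 ⟨‹Nonempty B›, hdir⟩
  set 𝒰 : Ultrafilter B := Ultrafilter.of Filter.atTop with h𝒰
  have hle : ∀ s ∈ (Filter.atTop : Filter B), s ∈ (𝒰 : Filter B) :=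
    fun s hs => Ultrafilter.of_le Filter.atTop hs
  choose r hr hconv using fun H : B => hB H.1 H.2
  -- the limit relation
  set R : G → G → Prop := fun x y => ∀ᶠ H in (𝒰 : Filter B), r H x y with hR
  have hmem : ∀ x ∈ U, ∀ᶠ H in (𝒰 : Filter B), x ∈ H.1 := by
    intro x hx
    have hx' : x ∈ (U : Set G) := hx
    rw [hU] at hx'
    simp only [Set.mem_iUnion, SetLike.mem_coe] at hx'
    obtain ⟨H₁, hH₁B, hxH₁⟩ := hx'
    have h1 : ∀ᶠ H in (Filter.atTop : Filter B), (⟨H₁, hH₁B⟩ : B) ≤ H :=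
      Filter.eventually_ge_atTop _
    have h2 : ∀ᶠ H in (𝒰 : Filter B), (⟨H₁, hH₁B⟩ : B) ≤ H := hle _ h1
    exact h2.mono fun K hK => hK hxH₁
  have hrefl : ∀ a : G, R a a := fun a =>
    Filter.Eventually.of_forall fun H => by
      haveI := (hr H).1; exact refl_of (r H) a
  have htrans : ∀ a b c : G, R a b → R b c → R a c := by
    intro a b c hab hbc
    exact (hab.and hbc).mono fun H ⟨h1, h2⟩ => by
      haveI := (hr H).1; exact _root_.trans_of (r H) h1 h2
  have hanti : ∀ a b : G, R a b → R b a → a = b := by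
    intro a b hab hba
    obtain ⟨H, h1, h2⟩ := (hab.and hba).exists
    haveI := (hr H).1
    exact _root_.antisymm h1 h2
  have htot : ∀ a b : G, R a b ∨ R b a := by
    intro a b
    have : ∀ᶠ H in (𝒰 : Filter B), r H a b ∨ r H b a :=
      Filter.Eventually.of_forall fun H => by
        haveI := (hr H).1; exact total_of (r H) a b
    exact (Ultrafilter.eventually_or.1 this)
  have hlin : IsLinearOrder G R :=
    { refl := hrefl, trans := htrans, antisymm := hanti, total := htot }
  have hinv : ∀ g x y : G, R x y → R (g * x) (g * y) := by
    intro g x y hxy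
    exact hxy.mono fun H h => (hr H).2 g x y h
  refine ⟨R, ⟨hlin, hinv⟩, ?_⟩
  · intro j g k hj hk hjg hgk
    obtain ⟨H, ⟨hjH, hkH⟩, h1, h2⟩ :=
      (((hmem j hj).and (hmem k hk)).and (hjg.and hgk)).exists
    have hgH : g ∈ H.1 := hconv H j g k hjH hkH h1 h2
    have : g ∈ (U : Set G) := by
      rw [hU]; simp only [Set.mem_iUnion, SetLike.mem_coe]; exact ⟨H.1, H.2, hgH⟩
    exact this
end

section
/- If G is a left ordered group, H is a normal convex subgroup of G, and B is a subgroup of G containing H such that B/H is a left-relatively convex subgroup of G/H, then B is a left-relatively convex subgroup of G. -/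
theorem leftRelConvex_of_quotient {G : Type*} [Group G]
    (r : G → G → Prop) (hr : IsLeftOrder r)
    (H : Subgroup G) [H.Normal] (hH : IsConvexWrt r H)
    (B : Subgroup G) (hHB : H ≤ B)
    (hBH : LeftRelConvex (B.map (QuotientGroup.mk' H))) :
    LeftRelConvex B := by
  obtain ⟨s, ⟨hslin, hsinv⟩, hsconv⟩ := hBH
  obtain ⟨hrlin, hrinv⟩ := hr
  haveI := hslin; haveI := hrlin
  set π : G →* G ⧸ H := QuotientGroup.mk' H with hπ
  set t : G → G → Prop :=
    fun x y => (π x = π y ∧ r x y) ∨ (π x ≠ π y ∧ s (π x) (π y)) with ht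
  have h1 : ∀ x, t x x := fun x => Or.inl ⟨rfl, refl_of r x⟩
  have h2 : ∀ a b c : G, t a b → t b c → t a c := by
    rintro a b c (⟨e1, q1⟩ | ⟨e1, q1⟩) (⟨e2, q2⟩ | ⟨e2, q2⟩)
    · exact Or.inl ⟨e1.trans e2, trans_of r q1 q2⟩
    · exact Or.inr ⟨e1 ▸ e2, e1 ▸ q2⟩
    · exact Or.inr ⟨fun h => e1 (h.trans e2.symm), e2 ▸ q1⟩
    · refine Or.inr ⟨fun h => e1 ?_, trans_of s q1 q2⟩
      exact antisymm_of s q1 (h ▸ q2)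
  have h3 : ∀ a b : G, t a b → t b a → a = b := by
    rintro a b (⟨e1, q1⟩ | ⟨e1, q1⟩) (⟨e2, q2⟩ | ⟨e2, q2⟩)
    · exact antisymm_of r q1 q2
    · exact absurd e1.symm e2
    · exact absurd e2.symm e1
    · exact absurd (antisymm_of s q1 q2) e1
  have h4 : ∀ a b : G, t a b ∨ t b a := by
    intro a b
    by_cases h : π a = π b
    · rcases total_of r a b with q | q
      · exact Or.inl (Or.inl ⟨h, q⟩)
      · exact Or.inr (Or.inl ⟨h.symm, q⟩)
    · rcases total_of s (π a) (π b) with q | q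
      · exact Or.inl (Or.inr ⟨h, q⟩)
      · exact Or.inr (Or.inr ⟨fun h' => h h'.symm, q⟩)
  haveI : IsRefl G t := ⟨h1⟩
  haveI : IsTrans G t := ⟨h2⟩
  haveI : IsAntisymm G t := ⟨h3⟩
  haveI : IsTotal G t := ⟨h4⟩
  refine ⟨t, ⟨{}, ?_⟩, ?_⟩
  · rintro g x y (⟨e, h⟩ | ⟨e, h⟩)
    · exact Or.inl ⟨by simp [map_mul, e], hrinv g x y h⟩
    · refine Or.inr ⟨fun h' => e ?_, by simpa [map_mul] using hsinv (π g) _ _ h⟩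
      exact mul_left_cancel (a := π g) (by simpa [map_mul] using h')
  · rintro j g k hj hk (⟨e1, q1⟩ | ⟨e1, q1⟩) (⟨e2, q2⟩ | ⟨e2, q2⟩)
    all_goals {
      have hmem : π g ∈ B.map π := by
        refine hsconv (π j) (π g) (π k) ⟨j, hj, rfl⟩ ⟨k, hk, rfl⟩ ?_ ?_
        · first
          | exact q1
          | exact e1 ▸ refl_of s (π g)
        · first
          | exact q2
          | exact e2 ▸ refl_of s (π g)
      obtain ⟨b, hb, hbg⟩ := hmem
      have hbH : b⁻¹ * g ∈ H := QuotientGroup.eq.mp hbg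
      have hg : g = b * (b⁻¹ * g) := by group
      rw [hg]
      exact B.mul_mem hb (hHB hbH)
    }
end

section
/- Let G be a group acting faithfully by order preserving permutations on a totally ordered set X. Then G is left orderable. Moreover, for any subset Y₀ of X, the pointwise stabilizer Stab_G(Y₀) is a left-relatively convex subgroup of G. -/
/-!
Choose a well-ordered index type `ι` with a surjection `E : ι → X` and compare `g, h ∈ G` by the
lexicographic order of the families `(φ g (E i))ᵢ`. Faithfulness makes this a linear order, and it
is left invariant because every `φ k` is order preserving. If `ι` lists the points of `Y₀` first,
an element lying between two elements that fix `Y₀` must, by well-founded induction along `ι`,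
agree with them at every point of `Y₀`, so it fixes `Y₀` as well.
-/

open Function

namespace Pi

variable {ι β γ : Type*} [LinearOrder ι]

theorem toLex_comp_le_toLex_comp [PartialOrder β] [PartialOrder γ] {f : β → γ}
    (hf : StrictMono f) {x y : ι → β} (h : toLex x ≤ toLex y) :
    toLex (f ∘ x) ≤ toLex (f ∘ y) := by
  obtain ⟨i, hlt, hi⟩ | h := h.lt_or_eq
  · exact le_of_lt ⟨i, fun j hj => congrArg f (hlt j hj), hf hi⟩
  · rw [toLex_inj.1 h]

theorem eqOn_of_toLex_le_of_le [WellFoundedLT ι] [LinearOrder β] {L : Set ι}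
    (hL : IsLowerSet L) {x y z : ι → β} (hxy : toLex x ≤ toLex y) (hyz : toLex y ≤ toLex z)
    (hxz : Set.EqOn x z L) : Set.EqOn x y L := by
  intro i
  induction i using WellFoundedLT.induction with
  | _ i ih =>
    intro hi
    have below : ∀ j < i, x j = y j := fun j hj => ih j hj (hL hj.le hi)
    have above : y i ≤ z i :=
      apply_le_of_toLex hyz fun j hj => (below j hj).symm.trans (hxz (hL hj.le hi))
    exact le_antisymm (apply_le_of_toLex hxy below) (above.trans (hxz hi).ge)

end Pi

universe u

theorem exists_wellOrder_equiv (α : Type u) :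
    ∃ (W : Type u) (_ : LinearOrder W) (_ : WellFoundedLT W), Nonempty (W ≃ α) :=
  ⟨_, inferInstance, inferInstance, Cardinal.eq.1 (Cardinal.mk_ord_toType _)⟩

theorem exists_wellOrder_surjective_isLowerSet_image_eq {X : Type u} (Y : Set X) :
    ∃ (ι : Type u) (_ : LinearOrder ι) (_ : WellFoundedLT ι) (E : ι → X) (L : Set ι),
      Surjective E ∧ IsLowerSet L ∧ E '' L = Y := by
  obtain ⟨A, _, _, ⟨eY⟩⟩ := exists_wellOrder_equiv Y
  obtain ⟨B, _, _, ⟨eX⟩⟩ := exists_wellOrder_equiv X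
  have : WellFoundedLT (A ⊕ₗ B) := ⟨Sum.lex_wf wellFounded_lt wellFounded_lt⟩
  refine ⟨A ⊕ₗ B, inferInstance, this, fun i => Sum.elim (fun a => (eY a : X)) eX (ofLex i),
    Set.range (toLex ∘ Sum.inl), fun x => ⟨toLex (Sum.inr (eX.symm x)), by simp⟩, ?_, ?_⟩
  · rintro _ (a | b) hle ⟨a', rfl⟩
    · exact ⟨a, rfl⟩
    · exact absurd hle Sum.Lex.not_inr_le_inl
  · ext x
    simp [eY.exists_congr_left]

section LexOrbit

variable {G X ι : Type*} [Group G] [LinearOrder X] {φ : G →* X ≃o X} {E : ι → X}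

def lexOrbit (φ : G →* X ≃o X) (E : ι → X) (g : G) : Lex (ι → X) :=
  toLex fun i => φ g (E i)

theorem lexOrbit_injective (hφ : Injective φ) (hE : Surjective E) : Injective (lexOrbit φ E) :=
  fun _ _ hgh => hφ <| OrderIso.ext <| funext <| hE.forall.2 fun i => congrFun hgh i

theorem isLeftOrder_lexOrbit [LinearOrder ι] [WellFoundedLT ι] (hφ : Injective φ)
    (hE : Surjective E) : IsLeftOrder ((· ≤ ·) on lexOrbit φ E) := by
  refine ⟨(lexOrbit_injective hφ hE).isLinearOrder_onFun _, fun k g h hgh => ?_⟩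
  have hmul (g : G) : lexOrbit φ E (k * g) = toLex (φ k ∘ ofLex (lexOrbit φ E g)) := by
    simp only [lexOrbit, map_mul]; rfl
  rw [onFun, hmul, hmul]
  exact Pi.toLex_comp_le_toLex_comp (φ k).strictMono hgh

theorem isConvexWrt_lexOrbit_comap_fixingSubgroup [LinearOrder ι] [WellFoundedLT ι] {L : Set ι}
    (hL : IsLowerSet L) :
    IsConvexWrt ((· ≤ ·) on lexOrbit φ E) ((fixingSubgroup (X ≃o X) (E '' L)).comap φ) := by
  have fixes {m : G} (hm : m ∈ (fixingSubgroup (X ≃o X) (E '' L)).comap φ) {i : ι} (hi : i ∈ L) :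
      φ m (E i) = E i :=
    (mem_fixingSubgroup_iff _).1 hm _ (Set.mem_image_of_mem E hi)
  intro j g k hj hk hjg hgk
  refine (mem_fixingSubgroup_iff _).2 ?_
  rintro _ ⟨i, hi, rfl⟩
  have agree : Set.EqOn (fun i => φ j (E i)) (fun i => φ g (E i)) L :=
    Pi.eqOn_of_toLex_le_of_le hL hjg hgk fun i hi => (fixes hj hi).trans (fixes hk hi).symm
  exact (agree hi).symm.trans (fixes hj hi)

end LexOrbit

theorem leftOrderable_of_faithful_order_action {G X : Type*} [Group G]
    [LinearOrder X] (φ : G →* (X ≃o X)) (hφ : Function.Injective φ) :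
    LeftOrderable G ∧
      ∀ Y₀ : Set X, ∃ S : Subgroup G,
        (S : Set G) = {g : G | ∀ y ∈ Y₀, φ g y = y} ∧ LeftRelConvex S := by
  have convex (Y₀ : Set X) : LeftRelConvex ((fixingSubgroup (X ≃o X) Y₀).comap φ) := by
    obtain ⟨ι, _, _, E, L, hE, hL, rfl⟩ := exists_wellOrder_surjective_isLowerSet_image_eq Y₀
    exact ⟨_, isLeftOrder_lexOrbit hφ hE, isConvexWrt_lexOrbit_comap_fixingSubgroup hL⟩
  refine ⟨(convex ∅).imp fun _ h => h.1, fun Y₀ => ⟨_, ?_, convex Y₀⟩⟩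
  exact Set.ext fun _ => mem_fixingSubgroup_iff _
end

section
/- Let W be a nonempty closed subset of ℝ, let α, β ∈ Aut(W), let a ∈ Fix_W(α), b ∈ Fix_W(β), with a < b. Suppose α has no fixed point in W ∩ (a, b] and β has no fixed point in W ∩ [a, b). Then the group generated by α and β contains a nonabelian free subsemigroup. -/
lemma crossed_aux {W : Set ℝ} (hWc : IsClosed W) (γ : W ≃o W) (a b t : W)
    (hab : a < b) (hfa : γ a = a)
    (hfree : ∀ w : W, a < w → w ≤ b → γ w ≠ w) (hdir : γ b < b)
    (hat : a < t) : ∃ n : ℕ, (γ ^ n) b < t := by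
  set d : ℕ → W := fun n => (γ ^ n) b with hd
  have hpowa : ∀ n : ℕ, (γ ^ n) a = a := by
    intro n
    induction n with
    | zero => simp
    | succ n ih => rw [pow_succ']; show γ ((γ ^ n) a) = a; rw [ih, hfa]
  have hsucc : ∀ n, d (n + 1) = γ (d n) := by
    intro n; show (γ ^ (n + 1)) b = γ ((γ ^ n) b); rw [pow_succ']; rfl
  have hd0 : d 0 = b := by simp [hd]
  have hstep : ∀ n, γ (d n) < d n := by
    intro n
    induction n with
    | zero => rw [hd0]; exact hdir
    | succ n ih =>
      have := γ.strictMono ih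
      rwa [← hsucc n] at this
  have hdlt : ∀ n, d (n + 1) < d n := fun n => by rw [hsucc]; exact hstep n
  have hgt : ∀ n, a < d n := by
    intro n
    have := (γ ^ n).strictMono hab
    rwa [hpowa] at this
  have hanti : Antitone fun n => ((d n : ℝ)) :=
    antitone_nat_of_succ_le fun n => Subtype.coe_le_coe.mpr (hdlt n).le
  have hbdd : BddBelow (Set.range fun n => ((d n : ℝ))) :=
    ⟨a, by rintro _ ⟨n, rfl⟩; exact Subtype.coe_le_coe.mpr (hgt n).le⟩
  set L : ℝ := ⨅ n, ((d n : ℝ)) with hL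
  have htend : Filter.Tendsto (fun n => ((d n : ℝ))) Filter.atTop (nhds L) :=
    tendsto_atTop_ciInf hanti hbdd
  have hLW : L ∈ W := hWc.mem_of_tendsto htend (Filter.Eventually.of_forall fun n => (d n).2)
  set Lw : W := ⟨L, hLW⟩ with hLwdef
  have hLle : ∀ n, Lw ≤ d n := fun n => Subtype.coe_le_coe.mp (ciInf_le hbdd n)
  have h1 : γ Lw ≤ Lw := by
    have h : ∀ n, γ Lw ≤ d n := fun n =>
      ((γ.monotone (hLle n)).trans_eq (hsucc n).symm).trans (hdlt n).le
    exact Subtype.coe_le_coe.mp (le_ciInf fun n => Subtype.coe_le_coe.mpr (h n))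
  have h2 : Lw ≤ γ Lw := by
    have hinv : ∀ n, γ⁻¹ Lw ≤ d n := by
      intro n
      have h := (γ⁻¹ : W ≃o W).monotone (hLle (n + 1))
      rw [hsucc n] at h
      have heq : γ⁻¹ (γ (d n)) = d n := γ.symm_apply_apply (d n)
      rwa [heq] at h
    have hle : γ⁻¹ Lw ≤ Lw :=
      Subtype.coe_le_coe.mp (le_ciInf fun n => Subtype.coe_le_coe.mpr (hinv n))
    have h := γ.monotone hle
    exact le_of_eq_of_le (γ.apply_symm_apply Lw).symm h
  have hfixL : γ Lw = Lw := le_antisymm h1 h2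
  have haL : a ≤ Lw :=
    Subtype.coe_le_coe.mp (le_ciInf fun n => Subtype.coe_le_coe.mpr (hgt n).le)
  have hLb : Lw ≤ b := (hLle 0).trans_eq hd0
  have hLa : Lw = a := by
    rcases eq_or_lt_of_le haL with h | h
    · exact h.symm
    · exact absurd hfixL (hfree Lw h hLb)
  have hlt : ⨅ n, ((d n : ℝ)) < (t : ℝ) := by
    rw [← hL, show L = (a : ℝ) from congrArg Subtype.val hLa]
    exact Subtype.coe_lt_coe.mpr hat
  obtain ⟨n, hn⟩ := exists_lt_of_ciInf_lt hlt
  exact ⟨n, Subtype.coe_lt_coe.mp hn⟩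

theorem free_subsemigroup_of_crossed_intervals
    (W : Set ℝ) (hW : W.Nonempty) (hWc : IsClosed W)
    (α β : W ≃o W) (a b : W) (hab : (a : ℝ) < b)
    (ha : α a = a) (hb : β b = b)
    (hα : ∀ w : W, (a : ℝ) < w → (w : ℝ) ≤ b → α w ≠ w)
    (hβ : ∀ w : W, (a : ℝ) ≤ w → (w : ℝ) < b → β w ≠ w) :
    ∃ x y : W ≃o W, x ∈ Subgroup.closure {α, β} ∧ y ∈ Subgroup.closure {α, β} ∧
      Function.Injective
        (FreeSemigroup.lift (fun i : Fin 2 => if i = 0 then x else y) :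
          FreeSemigroup (Fin 2) →ₙ* (W ≃o W)) := by
  have hab' : a < b := Subtype.coe_lt_coe.mp hab
  have hα' : ∀ w : W, a < w → w ≤ b → α w ≠ w := fun w h1 h2 =>
    hα w (Subtype.coe_lt_coe.mpr h1) (Subtype.coe_le_coe.mpr h2)
  have hβ' : ∀ w : W, a ≤ w → w < b → β w ≠ w := fun w h1 h2 =>
    hβ w (Subtype.coe_le_coe.mpr h1) (Subtype.coe_lt_coe.mpr h2)
  have hmemα : α ∈ Subgroup.closure {α, β} := Subgroup.subset_closure (by simp)
  have hmemβ : β ∈ Subgroup.closure {α, β} := Subgroup.subset_closure (by simp)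
  -- orient α : get γ₁ fixing a, fixed-point-free on (a,b], with γ₁ b < b
  obtain ⟨γ₁, hm1, hfa1, hfree1, hdir1⟩ :
      ∃ γ : W ≃o W, γ ∈ Subgroup.closure {α, β} ∧ γ a = a ∧
        (∀ w : W, a < w → w ≤ b → γ w ≠ w) ∧ γ b < b := by
    rcases (hα' b hab' le_rfl).lt_or_gt with h | h
    · exact ⟨α, hmemα, ha, hα', h⟩
    · refine ⟨α⁻¹, inv_mem hmemα, ?_, ?_, ?_⟩
      · exact α.injective ((α.apply_symm_apply a).trans ha.symm)
      · intro w h1 h2 heq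
        have h3 := congrArg α heq
        exact hα' w h1 h2 ((α.apply_symm_apply w).symm.trans h3).symm
      · have h4 := (α⁻¹ : W ≃o W).strictMono h
        exact lt_of_lt_of_eq h4 (α.symm_apply_apply b)
  -- orient β : get γ₂ fixing b, fixed-point-free on [a,b), with a < γ₂ a
  obtain ⟨γ₂, hm2, hfb2, hdir2⟩ :
      ∃ γ : W ≃o W, γ ∈ Subgroup.closure {α, β} ∧ γ b = b ∧ a < γ a := by
    rcases (hβ' a le_rfl hab').lt_or_gt with h | h
    · refine ⟨β⁻¹, inv_mem hmemβ, ?_, ?_⟩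
      · exact β.injective ((β.apply_symm_apply b).trans hb.symm)
      · have h4 := (β⁻¹ : W ≃o W).strictMono h
        exact lt_of_eq_of_lt (β.symm_apply_apply a).symm h4
    · exact ⟨β, hmemβ, hb, h⟩
  set c : W := γ₂ a with hc
  set s : W := γ₂ c with hs
  have hac : a < c := hdir2
  have hcb : c < b := by
    have := γ₂.strictMono hab'
    rwa [hfb2] at this
  have hcs : c < s := γ₂.strictMono hac
  have hsb : s < b := by
    have := γ₂.strictMono hcb
    rwa [hfb2] at this
  have hpow1a : ∀ n : ℕ, (γ₁ ^ n) a = a := by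
    intro n
    induction n with
    | zero => simp
    | succ n ih => rw [pow_succ']; show γ₁ ((γ₁ ^ n) a) = a; rw [ih, hfa1]
  obtain ⟨M, hM⟩ := crossed_aux hWc γ₁ a b c hab' hfa1 hfree1 hdir1 hac
  set x : W ≃o W := γ₂ * γ₂ with hx
  set y : W ≃o W := γ₁ ^ M with hy
  set r : W := y b with hr
  have hrc : r < c := hM
  have has : a < s := hac.trans hcs
  have hxa : x a = s := rfl
  have hxb : x b = b := by show γ₂ (γ₂ b) = b; rw [hfb2, hfb2]
  have hya : y a = a := hpow1a M
  refine ⟨x, y, mul_mem hm2 hm2, pow_mem hm1 M, ?_⟩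
  set f : Fin 2 → (W ≃o W) := fun i => if i = 0 then x else y with hf
  set φ := (FreeSemigroup.lift f : FreeSemigroup (Fin 2) →ₙ* (W ≃o W)) with hφ
  -- basic facts about f
  have hfx : f 0 = x := rfl
  have hfy : ∀ i : Fin 2, i ≠ 0 → f i = y := fun i hi => by simp [hf, hi]
  have hmapx : ∀ z : W, a ≤ z → z ≤ b → s ≤ x z ∧ x z ≤ b := fun z h1 h2 =>
    ⟨hxa ▸ x.monotone h1, hxb ▸ x.monotone h2⟩
  have hmapy : ∀ z : W, a ≤ z → z ≤ b → a ≤ y z ∧ y z ≤ r := fun z h1 h2 =>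
    ⟨hya ▸ y.monotone h1, y.monotone h2⟩
  -- key ping-pong invariant
  have key : ∀ u : FreeSemigroup (Fin 2), ∀ z : W, a ≤ z → z ≤ b →
      (if u.head = 0 then s ≤ φ u z ∧ φ u z ≤ b else a ≤ φ u z ∧ φ u z ≤ r) := by
    intro u
    induction u using FreeSemigroup.recOnMul with
    | ih1 i =>
      intro z h1 h2
      have hh : (FreeSemigroup.of i).head = i := rfl
      have happ : φ (FreeSemigroup.of i) = f i := FreeSemigroup.lift_of f i
      rw [hh, happ]
      by_cases hi : i = 0
      · rw [if_pos hi, hi, hfx]; exact hmapx z h1 h2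
      · rw [if_neg hi, hfy i hi]; exact hmapy z h1 h2
    | ih2 i v ih1 ihv =>
      intro z h1 h2
      have hPv : a ≤ φ v z ∧ φ v z ≤ b := by
        have h := ihv z h1 h2
        split_ifs at h with hv
        · exact ⟨has.le.trans h.1, h.2⟩
        · exact ⟨h.1, h.2.trans (hrc.le.trans hcb.le)⟩
      have hh : (FreeSemigroup.of i * v).head = i := rfl
      have happ : φ (FreeSemigroup.of i * v) z = f i (φ v z) := by
        rw [map_mul, FreeSemigroup.lift_of]; rfl
      rw [hh, happ]
      by_cases hi : i = 0
      · rw [if_pos hi, hi, hfx]; exact hmapx _ hPv.1 hPv.2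
      · rw [if_neg hi, hfy i hi]; exact hmapy _ hPv.1 hPv.2
  have movec : ∀ u : FreeSemigroup (Fin 2), φ u c ≠ c := by
    intro u heq
    have h := key u c hac.le hcb.le
    split_ifs at h with h0
    · exact absurd (heq ▸ h.1) (not_le.mpr hcs)
    · exact absurd (heq ▸ h.2) (not_le.mpr hrc)
  have hhead : ∀ u v : FreeSemigroup (Fin 2), φ u c = φ v c → u.head = v.head := by
    intro u v heq
    have hu := key u c hac.le hcb.le
    have hv := key v c hac.le hcb.le
    by_cases h1 : u.head = 0 <;> by_cases h2 : v.head = 0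
    · rw [h1, h2]
    · rw [if_pos h1] at hu; rw [if_neg h2] at hv
      have : s ≤ r := le_trans hu.1 (heq ▸ hv.2)
      exact absurd this (not_le.mpr (hrc.trans hcs))
    · rw [if_neg h1] at hu; rw [if_pos h2] at hv
      have : s ≤ r := le_trans hv.1 (heq ▸ hu.2)
      exact absurd this (not_le.mpr (hrc.trans hcs))
    · omega
  have hsplit : ∀ (i h : Fin 2) (t : List (Fin 2)) (z : W),
      φ ⟨i, h :: t⟩ z = f i (φ ⟨h, t⟩ z) := by
    intro i h t z
    rw [show (⟨i, h :: t⟩ : FreeSemigroup (Fin 2)) = FreeSemigroup.of i * ⟨h, t⟩ from rfl,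
      map_mul, FreeSemigroup.lift_of]
    rfl
  have hof : ∀ (i : Fin 2) (z : W), φ ⟨i, []⟩ z = f i z := by
    intro i z
    rw [show (⟨i, []⟩ : FreeSemigroup (Fin 2)) = FreeSemigroup.of i from rfl,
      FreeSemigroup.lift_of]
  have main : ∀ (tl : List (Fin 2)) (hu : Fin 2) (v : FreeSemigroup (Fin 2)),
      φ ⟨hu, tl⟩ c = φ v c → (⟨hu, tl⟩ : FreeSemigroup (Fin 2)) = v := by
    intro tl
    induction tl with
    | nil =>
      intro hu v heq
      obtain ⟨hv, tv⟩ := v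
      have hhd : hu = hv := hhead _ _ heq
      subst hhd
      cases tv with
      | nil => rfl
      | cons h t =>
        exfalso
        rw [hof, hsplit] at heq
        exact movec ⟨h, t⟩ ((f hu).injective heq).symm
    | cons h t ih =>
      intro hu v heq
      obtain ⟨hv, tv⟩ := v
      have hhd : hu = hv := hhead _ _ heq
      subst hhd
      cases tv with
      | nil =>
        exfalso
        rw [hof, hsplit] at heq
        exact movec ⟨h, t⟩ ((f hu).injective heq)
      | cons h' t' =>
        rw [hsplit, hsplit] at heq
        have h5 := ih h ⟨h', t'⟩ ((f hu).injective heq)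
        rw [FreeSemigroup.mk.injEq] at h5
        rw [FreeSemigroup.mk.injEq]
        exact ⟨rfl, by rw [h5.1, h5.2]⟩
  intro u v huv
  obtain ⟨hu, tu⟩ := u
  exact main tu hu v (by rw [show φ ⟨hu, tu⟩ = φ v from huv])
end

section
/- Let W be a nonempty closed subset of ℝ, let α₁, ..., αₙ ∈ Aut(W), and let G be the subgroup they generate. Suppose G contains no nonabelian free subsemigroup. If each αᵢ has a fixed point in W, then G has a common fixed point in W. -/
open Function

namespace CFPAux

variable {W : Set ℝ}

/-- least upper bound machinery inside a closed set -/
lemma exists_lub (hWc : IsClosed W) (A : Set W) (hne : A.Nonempty) (b₀ : W)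
    (hb₀ : ∀ a ∈ A, a ≤ b₀) :
    ∃ s : W, (∀ a ∈ A, a ≤ s) ∧ (∀ b : W, (∀ a ∈ A, a ≤ b) → s ≤ b) := by
  have hne' : (Subtype.val '' A).Nonempty := hne.image _
  have hbdd : BddAbove (Subtype.val '' A) := by
    refine ⟨(b₀ : ℝ), ?_⟩
    rintro x ⟨a, ha, rfl⟩
    exact_mod_cast hb₀ a ha
  have hsW : sSup (Subtype.val '' A) ∈ W := by
    have h1 := csSup_mem_closure hne' hbdd
    have h2 : closure (Subtype.val '' A) ⊆ closure W := by
      apply closure_mono; rintro x ⟨a, _, rfl⟩; exact a.2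
    have := h2 h1
    rwa [hWc.closure_eq] at this
  refine ⟨⟨_, hsW⟩, ?_, ?_⟩
  · intro a ha
    have : (a : ℝ) ≤ sSup (Subtype.val '' A) := le_csSup hbdd ⟨a, ha, rfl⟩
    exact_mod_cast this
  · intro b hb
    have : sSup (Subtype.val '' A) ≤ (b : ℝ) := by
      apply csSup_le hne'
      rintro x ⟨a, ha, rfl⟩
      exact_mod_cast hb a ha
    exact_mod_cast this

lemma exists_glb (hWc : IsClosed W) (A : Set W) (hne : A.Nonempty) (b₀ : W)
    (hb₀ : ∀ a ∈ A, b₀ ≤ a) :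
    ∃ s : W, (∀ a ∈ A, s ≤ a) ∧ (∀ b : W, (∀ a ∈ A, b ≤ a) → b ≤ s) := by
  have hne' : (Subtype.val '' A).Nonempty := hne.image _
  have hbdd : BddBelow (Subtype.val '' A) := by
    refine ⟨(b₀ : ℝ), ?_⟩
    rintro x ⟨a, ha, rfl⟩
    exact_mod_cast hb₀ a ha
  have hsW : sInf (Subtype.val '' A) ∈ W := by
    have h1 := csInf_mem_closure hne' hbdd
    have h2 : closure (Subtype.val '' A) ⊆ closure W := by
      apply closure_mono; rintro x ⟨a, _, rfl⟩; exact a.2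
    have := h2 h1
    rwa [hWc.closure_eq] at this
  refine ⟨⟨_, hsW⟩, ?_, ?_⟩
  · intro a ha
    have : sInf (Subtype.val '' A) ≤ (a : ℝ) := csInf_le hbdd ⟨a, ha, rfl⟩
    exact_mod_cast this
  · intro b hb
    have : (b : ℝ) ≤ sInf (Subtype.val '' A) := by
      apply le_csInf hne'
      rintro x ⟨a, ha, rfl⟩
      exact_mod_cast hb a ha
    exact_mod_cast this

end CFPAux

namespace CFPAux

variable {W : Set ℝ}

/-- order-theoretic IVT: a fixed point between a point pushed up and a point pushed down -/
lemma exists_fixed_between (hWc : IsClosed W) (e : W ≃o W) (x y : W) (hxy : x ≤ y)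
    (hex : x ≤ e x) (hey : e y ≤ y) :
    ∃ z : W, x ≤ z ∧ z ≤ y ∧ e z = z := by
  obtain ⟨s, hub, hlub⟩ := exists_lub hWc {t : W | x ≤ t ∧ t ≤ y ∧ t ≤ e t} ⟨x, le_refl x, hxy, hex⟩
    y (fun a ha => ha.2.1)
  have hxs : x ≤ s := hub x ⟨le_refl x, hxy, hex⟩
  have hsy : s ≤ y := hlub y (fun a ha => ha.2.1)
  have hse : s ≤ e s := by
    apply hlub
    intro a ha
    exact le_trans ha.2.2 (e.le_iff_le.mpr (hub a ha))
  rcases eq_or_lt_of_le hse with heq | hlt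
  · exact ⟨s, hxs, hsy, heq.symm⟩
  · -- s < e s; derive a contradiction
    exfalso
    have hsy' : s < y := by
      rcases eq_or_lt_of_le hsy with rfl | h
      · exact absurd (lt_of_lt_of_le hlt hey) (lt_irrefl s)
      · exact h
    -- the set of points strictly above s and ≤ y
    have hesy : e s ≤ y := le_trans (e.le_iff_le.mpr hsy) hey
    obtain ⟨i, hib, hilb⟩ := exists_glb hWc {t : W | s < t ∧ t ≤ y} ⟨e s, hlt, hesy⟩
      s (fun a ha => le_of_lt ha.1)
    -- every element of that set is pushed down
    have hdown : ∀ t : W, s < t → t ≤ y → e t < t := by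
      intro t hst hty
      rcases lt_trichotomy (e t) t with h | h | h
      · exact h
      · exact absurd (hub t ⟨le_trans hxs hst.le, hty, h.ge⟩) (not_le_of_gt hst)
      · exact absurd (hub t ⟨le_trans hxs hst.le, hty, h.le⟩) (not_le_of_gt hst)
    rcases eq_or_lt_of_le (hilb s (fun a ha => ha.1.le)) with hsi | hsi
    · -- i = s : e s is a lower bound of the set, contradiction with s < e s
      have : e s ≤ i := by
        apply hilb
        intro t ht
        exact le_trans (e.le_iff_le.mpr ht.1.le) (hdown t ht.1 ht.2).le
      rw [← hsi] at this
      exact absurd hlt (not_lt_of_ge this)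
    · -- s < i : i is in the set, e i < i, but e i must be ≤ s, contradiction
      have hiy : i ≤ y := hib (e s) ⟨hlt, hesy⟩ |>.trans hesy
      have hei : e i < i := hdown i hsi hiy
      have heis : e i ≤ s := by
        by_contra hc
        push_neg at hc
        exact absurd (hib (e i) ⟨hc, (hei.le.trans hiy)⟩) (not_le_of_gt hei)
      have : e i < e s := lt_of_le_of_lt heis hlt
      exact absurd (e.lt_iff_lt.mp this) (not_lt_of_ge hsi.le)

/-- if a point of `[lo, hi)` is pushed up and there are no fixed points there, all points are pushed up -/
lemma sign_up (hWc : IsClosed W) (e : W ≃o W) (lo hi : W)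
    (hnofix : ∀ t : W, lo ≤ t → t < hi → e t ≠ t) (hlo : lo < e lo) :
    ∀ t : W, lo ≤ t → t < hi → t < e t := by
  intro t hlot hthi
  rcases lt_trichotomy t (e t) with h | h | h
  · exact h
  · exact absurd h.symm (hnofix t hlot hthi)
  · obtain ⟨z, hz1, hz2, hz3⟩ := exists_fixed_between hWc e lo t hlot hlo.le h.le
    exact absurd hz3 (hnofix z hz1 (lt_of_le_of_lt hz2 hthi))

/-- dual version: if the top point of `(lo, hi]` is pushed down and no fixed points there, all are pushed down -/
lemma sign_down (hWc : IsClosed W) (e : W ≃o W) (lo hi : W)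
    (hnofix : ∀ t : W, lo < t → t ≤ hi → e t ≠ t) (hhi : e hi < hi) :
    ∀ t : W, lo < t → t ≤ hi → e t < t := by
  intro t hlot hthi
  rcases lt_trichotomy (e t) t with h | h | h
  · exact h
  · exact absurd h (hnofix t hlot hthi)
  · obtain ⟨z, hz1, hz2, hz3⟩ := exists_fixed_between hWc e t hi hthi h.le hhi.le
    exact absurd hz3 (hnofix z (lt_of_lt_of_le hlot hz1) hz2)

end CFPAux

namespace CFPAux

variable {W : Set ℝ}

lemma inv_fixed (e : W ≃o W) {x : W} (h : e x = x) : e⁻¹ x = x := by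
  conv_lhs => rw [← h]
  exact e.symm_apply_apply x

lemma inv_apply_lt (e : W ≃o W) {x : W} (h : e x < x) : x < e⁻¹ x := by
  have := (e⁻¹ : W ≃o W).lt_iff_lt.mpr h
  rwa [show (e⁻¹ : W ≃o W) (e x) = x from e.symm_apply_apply x] at this

lemma inv_apply_gt (e : W ≃o W) {x : W} (h : x < e x) : e⁻¹ x < x := by
  have := (e⁻¹ : W ≃o W).lt_iff_lt.mpr h
  rwa [show (e⁻¹ : W ≃o W) (e x) = x from e.symm_apply_apply x] at this

lemma inv_fixed_iff (e : W ≃o W) {x : W} : e⁻¹ x = x ↔ e x = x := by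
  constructor
  · intro h
    conv_lhs => rw [← h]
    exact e.apply_symm_apply x
  · exact inv_fixed e

/-- a lub of a set of fixed points is fixed -/
lemma lub_fixed (e : W ≃o W) {A : Set W} {s : W} (hub : ∀ a ∈ A, a ≤ s)
    (hlub : ∀ b : W, (∀ a ∈ A, a ≤ b) → s ≤ b) (hfix : ∀ a ∈ A, e a = a) : e s = s := by
  have h1 : s ≤ e s := by
    apply hlub
    intro a ha
    calc a = e a := (hfix a ha).symm
    _ ≤ e s := e.le_iff_le.mpr (hub a ha)
  have h2 : s ≤ e⁻¹ s := by
    apply hlub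
    intro a ha
    calc a = e⁻¹ a := (inv_fixed e (hfix a ha)).symm
    _ ≤ e⁻¹ s := (e⁻¹ : W ≃o W).le_iff_le.mpr (hub a ha)
  have h3 : e s ≤ s := by
    have := e.le_iff_le.mpr h2
    rwa [show e (e⁻¹ s) = s from e.apply_symm_apply s] at this
  exact le_antisymm h3 h1

/-- a glb of a set of fixed points is fixed -/
lemma glb_fixed (e : W ≃o W) {A : Set W} {s : W} (hlb : ∀ a ∈ A, s ≤ a)
    (hglb : ∀ b : W, (∀ a ∈ A, b ≤ a) → b ≤ s) (hfix : ∀ a ∈ A, e a = a) : e s = s := by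
  have h1 : e s ≤ s := by
    apply hglb
    intro a ha
    calc e s ≤ e a := e.le_iff_le.mpr (hlb a ha)
    _ = a := hfix a ha
  have h2 : e⁻¹ s ≤ s := by
    apply hglb
    intro a ha
    calc e⁻¹ s ≤ e⁻¹ a := (e⁻¹ : W ≃o W).le_iff_le.mpr (hlb a ha)
    _ = a := inv_fixed e (hfix a ha)
  have h3 : s ≤ e s := by
    have := e.le_iff_le.mpr h2
    rwa [show e (e⁻¹ s) = s from e.apply_symm_apply s] at this
  exact le_antisymm h1 h3

lemma pow_apply_succ (e : W ≃o W) (n : ℕ) (x : W) : (e^(n+1)) x = e ((e^n) x) := by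
  rw [pow_succ']; rfl

/-- attraction: iterates of a point under a map pushing up on `[z, q)` exceed any `r < q` -/
lemma attract (hWc : IsClosed W) (e : W ≃o W) (z q : W) (hzq : z < q) (hq : e q = q)
    (hup : ∀ t : W, z ≤ t → t < q → t < e t) :
    ∀ r : W, r < q → ∃ N : ℕ, r < (e^N) z := by
  have horb_lt : ∀ n : ℕ, (e^n) z < q := by
    intro n
    induction n with
    | zero => exact hzq
    | succ n ih =>
      rw [pow_apply_succ]
      calc e ((e^n) z) < e q := e.lt_iff_lt.mpr ih
      _ = q := hq
  have horb_ge : ∀ n : ℕ, z ≤ (e^n) z := by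
    intro n
    induction n with
    | zero => exact le_refl z
    | succ n ih =>
      rw [pow_apply_succ]
      exact le_trans ih (hup _ ih (horb_lt n)).le
  obtain ⟨s, hub, hlub⟩ := exists_lub hWc (Set.range fun n : ℕ => (e^n) z)
    ⟨z, 0, rfl⟩ q (by rintro a ⟨n, rfl⟩; exact (horb_lt n).le)
  have hzs : z ≤ s := hub _ ⟨0, rfl⟩
  have hsq : s ≤ q := hlub q (by rintro a ⟨n, rfl⟩; exact (horb_lt n).le)
  have hse : s ≤ e s := by
    apply hlub
    rintro a ⟨n, rfl⟩
    calc (e^n) z ≤ e ((e^n) z) := (hup _ (horb_ge n) (horb_lt n)).le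
    _ ≤ e s := e.le_iff_le.mpr (hub _ ⟨n, rfl⟩)
  have hsinv : s ≤ e⁻¹ s := by
    apply hlub
    rintro a ⟨n, rfl⟩
    have h1 : (e^(n+1)) z ≤ s := hub _ ⟨n+1, rfl⟩
    rw [pow_apply_succ] at h1
    have := (e⁻¹ : W ≃o W).le_iff_le.mpr h1
    rwa [show (e⁻¹ : W ≃o W) (e ((e^n) z)) = (e^n) z from e.symm_apply_apply _] at this
  have hes : e s ≤ s := by
    have := e.le_iff_le.mpr hsinv
    rwa [show e (e⁻¹ s) = s from e.apply_symm_apply s] at this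
  have hsfix : e s = s := le_antisymm hes hse
  have hsq' : s = q := by
    rcases eq_or_lt_of_le hsq with h | h
    · exact h
    · exact absurd hsfix (ne_of_lt (hup s hzs h)).symm
  intro r hr
  by_contra hc
  push_neg at hc
  have : s ≤ r := hlub r (by rintro a ⟨n, rfl⟩; exact hc n)
  rw [hsq'] at this
  exact absurd hr (not_lt_of_ge this)

end CFPAux

namespace CFPAux

variable {W : Set ℝ}

lemma fin2cases (i : Fin 2) : i = 0 ∨ i = 1 := by omega

lemma pow_fixed (e : W ≃o W) {x : W} (h : e x = x) : ∀ n : ℕ, (e^n) x = x := by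
  intro n
  induction n with
  | zero => rfl
  | succ n ih => rw [pow_apply_succ, ih, h]

lemma decomp (w : FreeSemigroup (Fin 2)) :
    w = .of w.head ∨ ∃ w', w = .of w.head * w' ∧ w'.length + 1 = w.length := by
  induction w using FreeSemigroup.recOnMul with
  | ih1 x => exact Or.inl rfl
  | ih2 x y ihx ihy =>
    refine Or.inr ⟨y, ?_, ?_⟩
    · rfl
    · rw [FreeSemigroup.length_mul, FreeSemigroup.length_of]; omega

lemma length_pos' (w : FreeSemigroup (Fin 2)) : 1 ≤ w.length := by
  simp [FreeSemigroup.length]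

/-- the ping-pong lemma for free subsemigroups -/
lemma pingpong_inj (a b : W ≃o W) (X Y : Set W) (p : W)
    (hXY : ∀ t, t ∈ X → t ∉ Y) (hpX : p ∉ X) (hpY : p ∉ Y)
    (ha : ∀ t : W, (t ∈ X ∨ t ∈ Y ∨ t = p) → a t ∈ X)
    (hb : ∀ t : W, (t ∈ X ∨ t ∈ Y ∨ t = p) → b t ∈ Y) :
    Function.Injective (FreeSemigroup.lift (fun i : Fin 2 => if i = 0 then a else b)) := by
  set c : Fin 2 → (W ≃o W) := fun i => if i = 0 then a else b with hc
  set L := FreeSemigroup.lift c with hL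
  set S : Fin 2 → Set W := fun i => if i = 0 then X else Y with hS
  have hSsub : ∀ (i : Fin 2) (t : W), t ∈ S i → (t ∈ X ∨ t ∈ Y ∨ t = p) := by
    intro i t ht
    rcases fin2cases i with rfl | rfl
    · exact Or.inl (by simpa [hS] using ht)
    · exact Or.inr (Or.inl (by simpa [hS] using ht))
  have hcS : ∀ (i : Fin 2) (t : W), (t ∈ X ∨ t ∈ Y ∨ t = p) → (c i) t ∈ S i := by
    intro i t ht
    rcases fin2cases i with rfl | rfl
    · simpa [hc, hS] using ha t ht
    · simpa [hc, hS] using hb t ht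
  have claim1 : ∀ (w : FreeSemigroup (Fin 2)) (t : W), (t ∈ X ∨ t ∈ Y ∨ t = p) →
      (L w) t ∈ S w.head := by
    intro w
    induction w using FreeSemigroup.recOnMul with
    | ih1 x =>
      intro t ht
      rw [hL, FreeSemigroup.lift_of]
      exact hcS x t ht
    | ih2 x y ihx ihy =>
      intro t ht
      have h1 : (L (FreeSemigroup.of x * y)) t = (c x) ((L y) t) := by
        rw [hL, map_mul, FreeSemigroup.lift_of]; rfl
      rw [h1]
      exact hcS x _ (hSsub y.head _ (ihy t ht))
  have claim2 : ∀ (w : FreeSemigroup (Fin 2)), (L w) p ∈ X ∨ (L w) p ∈ Y := by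
    intro w
    have := claim1 w p (Or.inr (Or.inr rfl))
    rcases fin2cases w.head with h | h <;> rw [h] at this
    · exact Or.inl (by simpa [hS] using this)
    · exact Or.inr (by simpa [hS] using this)
  have key : ∀ (N : ℕ) (w₁ w₂ : FreeSemigroup (Fin 2)), w₁.length ≤ N → L w₁ = L w₂ →
      w₁ = w₂ := by
    intro N
    induction N with
    | zero => intro w₁ w₂ hlen _; exact absurd (le_trans (length_pos' w₁) hlen) (by omega)
    | succ N ih =>
      intro w₁ w₂ hlen heq
      have hhead : w₁.head = w₂.head := by
        by_contra hne
        have h1 := claim1 w₁ p (Or.inr (Or.inr rfl))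
        have h2 := claim1 w₂ p (Or.inr (Or.inr rfl))
        rw [heq] at h1
        rcases fin2cases w₁.head with e1 | e1 <;> rcases fin2cases w₂.head with e2 | e2 <;>
          rw [e1] at h1 <;> rw [e2] at h2
        · exact hne (e1.trans e2.symm)
        · exact hXY _ (by simpa [hS] using h1) (by simpa [hS] using h2)
        · exact hXY _ (by simpa [hS] using h2) (by simpa [hS] using h1)
        · exact hne (e1.trans e2.symm)
      rcases decomp w₁ with h1 | ⟨w₁', hw₁, hl₁⟩ <;> rcases decomp w₂ with h2 | ⟨w₂', hw₂, hl₂⟩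
      · rw [h1, h2, hhead]
      · -- w₁ = of h, w₂ = of h * w₂' : impossible
        exfalso
        rw [h1, hw₂, ← hhead] at heq
        rw [map_mul] at heq
        have hone : L w₂' = 1 := left_eq_mul.mp heq
        rcases claim2 w₂' with h | h <;> rw [hone] at h
        · exact hpX h
        · exact hpY h
      · exfalso
        rw [h2, hw₁, hhead] at heq
        rw [map_mul] at heq
        have hone : L w₁' = 1 := left_eq_mul.mp heq.symm
        rcases claim2 w₁' with h | h <;> rw [hone] at h
        · exact hpX h
        · exact hpY h
      · rw [hw₁, hw₂, ← hhead] at heq ⊢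
        rw [map_mul, map_mul] at heq
        have : L w₁' = L w₂' := mul_left_cancel heq
        rw [ih w₁' w₂' (by omega) this]
  intro w₁ w₂ heq
  exact key w₁.length w₁ w₂ (le_refl _) heq

/-- the main ping-pong construction: two elements with crossed attracting fixed points
    generate a free subsemigroup -/
lemma pingpong (hWc : IsClosed W) (G : Subgroup (W ≃o W)) (φ ψ : W ≃o W)
    (hφG : φ ∈ G) (hψG : ψ ∈ G) (c v : W) (hcv : c < v) (hφv : φ v = v) (hψc : ψ c = c)
    (hφup : ∀ t : W, c ≤ t → t < v → t < φ t)
    (hψdown : ∀ t : W, c < t → t ≤ v → ψ t < t) :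
    ∃ L : FreeSemigroup (Fin 2) →ₙ* (W ≃o W), Function.Injective L ∧ ∀ s, L s ∈ G := by
  set p := ψ v with hp
  have hpc : c < p := by
    have := ψ.lt_iff_lt.mpr hcv
    rwa [hψc] at this
  have hpv : p < v := hψdown v hcv (le_refl v)
  obtain ⟨N, hN⟩ := attract hWc φ c v hcv hφv hφup p hpv
  set a := φ^N * ψ with hadef
  set b := ψ * φ with hbdef
  set X : Set W := {t : W | p < t ∧ t < v} with hX
  set Y : Set W := {t : W | c < t ∧ t < p} with hY
  have hmemI : ∀ t : W, (t ∈ X ∨ t ∈ Y ∨ t = p) → c < t ∧ t < v := by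
    rintro t (ht | ht | rfl)
    · exact ⟨lt_trans hpc ht.1, ht.2⟩
    · exact ⟨ht.1, lt_trans ht.2 hpv⟩
    · exact ⟨hpc, hpv⟩
  have ha : ∀ t : W, (t ∈ X ∨ t ∈ Y ∨ t = p) → a t ∈ X := by
    intro t ht
    obtain ⟨hct, htv⟩ := hmemI t ht
    have hψt1 : c < ψ t := by
      have := ψ.lt_iff_lt.mpr hct
      rwa [hψc] at this
    have hψt2 : ψ t < v := lt_trans (hψdown t hct htv.le) htv
    have happly : a t = (φ^N) (ψ t) := rfl
    constructor
    · rw [happly]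
      exact lt_trans hN ((φ^N).lt_iff_lt.mpr hψt1)
    · rw [happly]
      have := (φ^N).lt_iff_lt.mpr hψt2
      rwa [pow_fixed φ hφv N] at this
  have hb : ∀ t : W, (t ∈ X ∨ t ∈ Y ∨ t = p) → b t ∈ Y := by
    intro t ht
    obtain ⟨hct, htv⟩ := hmemI t ht
    have hφt1 : c < φ t := lt_trans hct (hφup t hct.le htv)
    have hφt2 : φ t < v := by
      have := φ.lt_iff_lt.mpr htv
      rwa [hφv] at this
    have happly : b t = ψ (φ t) := rfl
    constructor
    · rw [happly]
      have := ψ.lt_iff_lt.mpr hφt1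
      rwa [hψc] at this
    · rw [happly]
      exact ψ.lt_iff_lt.mpr hφt2
  have hXY : ∀ t, t ∈ X → t ∉ Y := by
    intro t ht ht'
    exact absurd (lt_trans ht.1 ht'.2) (lt_irrefl p)
  refine ⟨FreeSemigroup.lift (fun i : Fin 2 => if i = 0 then a else b), ?_, ?_⟩
  · exact pingpong_inj a b X Y p hXY (fun h => lt_irrefl p h.1) (fun h => lt_irrefl p h.2) ha hb
  · intro s
    induction s using FreeSemigroup.recOnMul with
    | ih1 x =>
      rw [FreeSemigroup.lift_of]
      rcases fin2cases x with rfl | rfl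
      · simpa using mul_mem (pow_mem hφG N) hψG
      · simpa using mul_mem hψG hφG
    | ih2 x y ihx ihy =>
      rw [map_mul]
      exact mul_mem ihx ihy

end CFPAux

namespace CFPAux

variable {W : Set ℝ}

/-- core contradiction: a family with a common fixed point and an element with a fixed point,
    but no joint fixed point, yields a free subsemigroup -/
lemma contradiction_core (hWc : IsClosed W) (G : Subgroup (W ≃o W))
    {ι : Type*} (hh : ι → (W ≃o W)) (hhG : ∀ j, hh j ∈ G)
    (f : W ≃o W) (hfG : f ∈ G)
    (u₀ v₀ : W) (hu₀ : ∀ j, hh j u₀ = u₀) (hv₀ : f v₀ = v₀)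
    (hdisj : ∀ w : W, (∀ j, hh j w = w) → f w ≠ w) :
    ∃ L : FreeSemigroup (Fin 2) →ₙ* (W ≃o W), Function.Injective L ∧ ∀ s, L s ∈ G := by
  have hne : u₀ ≠ v₀ := by
    intro h
    exact hdisj u₀ hu₀ (by rw [h]; exact hv₀)
  rcases lt_or_gt_of_ne hne with hlt | hgt
  · -- Case A : u₀ < v₀
    obtain ⟨u, hubu, hlubu⟩ := exists_lub hWc {w : W | (∀ j, hh j w = w) ∧ u₀ ≤ w ∧ w ≤ v₀}
      ⟨u₀, hu₀, le_refl _, hlt.le⟩ v₀ (fun a ha => ha.2.2)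
    have hu_fix : ∀ j, hh j u = u := fun j => lub_fixed (hh j) hubu hlubu (fun a ha => ha.1 j)
    have hu₀u : u₀ ≤ u := hubu u₀ ⟨hu₀, le_refl _, hlt.le⟩
    have huv₀ : u ≤ v₀ := hlubu v₀ (fun a ha => ha.2.2)
    have hu_lt_v₀ : u < v₀ := by
      rcases eq_or_lt_of_le huv₀ with h | h
      · exact absurd (by rw [h]; exact hv₀) (hdisj u hu_fix)
      · exact h
    have gapF : ∀ w : W, u < w → w ≤ v₀ → ¬(∀ j, hh j w = w) := by
      intro w h1 h2 hfw
      exact absurd (hubu w ⟨hfw, le_trans hu₀u (le_of_lt h1), h2⟩) (not_le_of_gt h1)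
    obtain ⟨v, hlbv, hglbv⟩ := exists_glb hWc {w : W | f w = w ∧ u ≤ w ∧ w ≤ v₀}
      ⟨v₀, hv₀, hu_lt_v₀.le, le_refl _⟩ u (fun a ha => ha.2.1)
    have hv_fix : f v = v := glb_fixed f hlbv hglbv (fun a ha => ha.1)
    have huv : u ≤ v := hglbv u (fun a ha => ha.2.1)
    have hvv₀ : v ≤ v₀ := hlbv v₀ ⟨hv₀, hu_lt_v₀.le, le_refl _⟩
    have hu_lt_v : u < v := by
      rcases eq_or_lt_of_le huv with h | h
      · exact absurd (by rw [h]; exact hv_fix) (hdisj u hu_fix)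
      · exact h
    have gapf : ∀ w : W, u ≤ w → w < v → f w ≠ w := by
      intro w h1 h2 hfw
      exact absurd (hlbv w ⟨hfw, h1, le_trans h2.le hvv₀⟩) (not_le_of_gt h2)
    -- select φ ∈ {f, f⁻¹} pushing up on [u, v)
    have hφ : ∃ φ : W ≃o W, φ ∈ G ∧ φ v = v ∧ ∀ t : W, u ≤ t → t < v → t < φ t := by
      rcases lt_trichotomy u (f u) with hdir | hdir | hdir
      · exact ⟨f, hfG, hv_fix, sign_up hWc f u v gapf hdir⟩
      · exact absurd hdir.symm (gapf u (le_refl u) hu_lt_v)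
      · refine ⟨f⁻¹, inv_mem hfG, inv_fixed f hv_fix, ?_⟩
        apply sign_up hWc f⁻¹ u v
        · intro t h1 h2 hft
          exact gapf t h1 h2 ((inv_fixed_iff f).mp hft)
        · exact inv_apply_lt f hdir
    obtain ⟨φ, hφG, hφv, hφup⟩ := hφ
    -- select a generator not fixing v
    have hvF : ¬(∀ j, hh j v = v) := gapF v hu_lt_v hvv₀
    push_neg at hvF
    obtain ⟨j, hj⟩ := hvF
    set h := hh j with hhdef
    obtain ⟨c, hubc, hlubc⟩ := exists_lub hWc {w : W | h w = w ∧ u ≤ w ∧ w ≤ v}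
      ⟨u, hu_fix j, le_refl _, hu_lt_v.le⟩ v (fun a ha => ha.2.2)
    have hc_fix : h c = c := lub_fixed h hubc hlubc (fun a ha => ha.1)
    have huc : u ≤ c := hubc u ⟨hu_fix j, le_refl _, hu_lt_v.le⟩
    have hcv' : c ≤ v := hlubc v (fun a ha => ha.2.2)
    have hcv : c < v := by
      rcases eq_or_lt_of_le hcv' with h' | h'
      · exact absurd (by rw [← h']; exact hc_fix) hj
      · exact h'
    have gaph : ∀ w : W, c < w → w ≤ v → h w ≠ w := by
      intro w h1 h2 hfw
      exact absurd (hubc w ⟨hfw, le_trans huc h1.le, h2⟩) (not_le_of_gt h1)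
    -- select ψ ∈ {h, h⁻¹} pushing down on (c, v]
    have hψ : ∃ ψ : W ≃o W, ψ ∈ G ∧ ψ c = c ∧ ∀ t : W, c < t → t ≤ v → ψ t < t := by
      rcases lt_trichotomy (h v) v with hdir | hdir | hdir
      · exact ⟨h, hhG j, hc_fix, sign_down hWc h c v gaph hdir⟩
      · exact absurd hdir hj
      · refine ⟨h⁻¹, inv_mem (hhG j), inv_fixed h hc_fix, ?_⟩
        apply sign_down hWc h⁻¹ c v
        · intro t h1 h2 hft
          exact gaph t h1 h2 ((inv_fixed_iff h).mp hft)
        · exact inv_apply_gt h hdir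
    obtain ⟨ψ, hψG, hψc, hψdown⟩ := hψ
    exact pingpong hWc G φ ψ hφG hψG c v hcv hφv hψc
      (fun t hct htv => hφup t (le_trans huc hct) htv) hψdown
  · -- Case B : v₀ < u₀ (mirror image)
    obtain ⟨u, hlbu, hglbu⟩ := exists_glb hWc {w : W | (∀ j, hh j w = w) ∧ v₀ ≤ w ∧ w ≤ u₀}
      ⟨u₀, hu₀, hgt.le, le_refl _⟩ v₀ (fun a ha => ha.2.1)
    have hu_fix : ∀ j, hh j u = u := fun j => glb_fixed (hh j) hlbu hglbu (fun a ha => ha.1 j)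
    have huu₀ : u ≤ u₀ := hlbu u₀ ⟨hu₀, hgt.le, le_refl _⟩
    have hv₀u : v₀ ≤ u := hglbu v₀ (fun a ha => ha.2.1)
    have hv₀_lt_u : v₀ < u := by
      rcases eq_or_lt_of_le hv₀u with h | h
      · exact absurd (by rw [← h]; exact hv₀) (hdisj u hu_fix)
      · exact h
    have gapF : ∀ w : W, v₀ ≤ w → w < u → ¬(∀ j, hh j w = w) := by
      intro w h1 h2 hfw
      exact absurd (hlbu w ⟨hfw, h1, le_trans h2.le huu₀⟩) (not_le_of_gt h2)
    obtain ⟨v, hubv, hlubv⟩ := exists_lub hWc {w : W | f w = w ∧ v₀ ≤ w ∧ w ≤ u}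
      ⟨v₀, hv₀, le_refl _, hv₀_lt_u.le⟩ u (fun a ha => ha.2.2)
    have hv_fix : f v = v := lub_fixed f hubv hlubv (fun a ha => ha.1)
    have hvu : v ≤ u := hlubv u (fun a ha => ha.2.2)
    have hv₀v : v₀ ≤ v := hubv v₀ ⟨hv₀, le_refl _, hv₀_lt_u.le⟩
    have hv_lt_u : v < u := by
      rcases eq_or_lt_of_le hvu with h | h
      · exact absurd (by rw [← h]; exact hv_fix) (hdisj u hu_fix)
      · exact h
    have gapf : ∀ w : W, v < w → w ≤ u → f w ≠ w := by
      intro w h1 h2 hfw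
      exact absurd (hubv w ⟨hfw, le_trans hv₀v h1.le, h2⟩) (not_le_of_gt h1)
    -- select φ ∈ {f, f⁻¹} pushing down on (v, u]
    have hφ : ∃ φ : W ≃o W, φ ∈ G ∧ φ v = v ∧ ∀ t : W, v < t → t ≤ u → φ t < t := by
      rcases lt_trichotomy (f u) u with hdir | hdir | hdir
      · exact ⟨f, hfG, hv_fix, sign_down hWc f v u gapf hdir⟩
      · exact absurd hdir (gapf u hv_lt_u (le_refl u))
      · refine ⟨f⁻¹, inv_mem hfG, inv_fixed f hv_fix, ?_⟩
        apply sign_down hWc f⁻¹ v u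
        · intro t h1 h2 hft
          exact gapf t h1 h2 ((inv_fixed_iff f).mp hft)
        · exact inv_apply_gt f hdir
    obtain ⟨φ, hφG, hφv, hφdown⟩ := hφ
    -- select a generator not fixing v
    have hvF : ¬(∀ j, hh j v = v) := gapF v hv₀v hv_lt_u
    push_neg at hvF
    obtain ⟨j, hj⟩ := hvF
    set h := hh j with hhdef
    obtain ⟨c, hlbc, hglbc⟩ := exists_glb hWc {w : W | h w = w ∧ v ≤ w ∧ w ≤ u}
      ⟨u, hu_fix j, hv_lt_u.le, le_refl _⟩ v (fun a ha => ha.2.1)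
    have hc_fix : h c = c := glb_fixed h hlbc hglbc (fun a ha => ha.1)
    have hcu : c ≤ u := hlbc u ⟨hu_fix j, hv_lt_u.le, le_refl _⟩
    have hvc' : v ≤ c := hglbc v (fun a ha => ha.2.1)
    have hvc : v < c := by
      rcases eq_or_lt_of_le hvc' with h' | h'
      · exact absurd (by rw [h']; exact hc_fix) hj
      · exact h'
    have gaph : ∀ w : W, v ≤ w → w < c → h w ≠ w := by
      intro w h1 h2 hfw
      exact absurd (hlbc w ⟨hfw, h1, le_trans h2.le hcu⟩) (not_le_of_gt h2)
    -- select ψ ∈ {h, h⁻¹} pushing up on [v, c)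
    have hψ : ∃ ψ : W ≃o W, ψ ∈ G ∧ ψ c = c ∧ ∀ t : W, v ≤ t → t < c → t < ψ t := by
      rcases lt_trichotomy v (h v) with hdir | hdir | hdir
      · exact ⟨h, hhG j, hc_fix, sign_up hWc h v c gaph hdir⟩
      · exact absurd hdir.symm hj
      · refine ⟨h⁻¹, inv_mem (hhG j), inv_fixed h hc_fix, ?_⟩
        apply sign_up hWc h⁻¹ v c
        · intro t h1 h2 hft
          exact gaph t h1 h2 ((inv_fixed_iff h).mp hft)
        · exact inv_apply_lt h hdir
    obtain ⟨ψ, hψG, hψc, hψup⟩ := hψ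
    exact pingpong hWc G ψ φ hψG hφG v c hvc hψc hφv hψup
      (fun t hvt htc => hφdown t hvt (le_trans htc hcu))

end CFPAux

namespace CFPAux

lemma main_aux (W : Set ℝ) (hW : W.Nonempty) (hWc : IsClosed W) :
    ∀ (n : ℕ) (α : Fin n → (W ≃o W)),
    (¬∃ L : FreeSemigroup (Fin 2) →ₙ* (W ≃o W), Function.Injective L ∧
      ∀ s, L s ∈ Subgroup.closure (Set.range α)) →
    (∀ i, ∃ w : W, α i w = w) → ∃ w : W, ∀ i, α i w = w := by
  intro n
  induction n with
  | zero =>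
    intro α _ _
    exact ⟨⟨hW.choose, hW.choose_spec⟩, fun i => i.elim0⟩
  | succ n ih =>
    intro α hNS hfix
    set β : Fin n → (W ≃o W) := fun i => α i.castSucc with hβ
    have hsub : Subgroup.closure (Set.range β) ≤ Subgroup.closure (Set.range α) := by
      apply Subgroup.closure_mono
      rintro _ ⟨i, rfl⟩
      exact ⟨i.castSucc, rfl⟩
    have hNSβ : ¬∃ L : FreeSemigroup (Fin 2) →ₙ* (W ≃o W), Function.Injective L ∧
        ∀ s, L s ∈ Subgroup.closure (Set.range β) := by
      rintro ⟨L, hinj, hmem⟩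
      exact hNS ⟨L, hinj, fun s => hsub (hmem s)⟩
    obtain ⟨u₀, hu₀⟩ := ih β hNSβ (fun i => hfix i.castSucc)
    obtain ⟨v₀, hv₀⟩ := hfix (Fin.last n)
    by_contra hc
    push_neg at hc
    have hdisj : ∀ w : W, (∀ j : Fin n, β j w = w) → α (Fin.last n) w ≠ w := by
      intro w hw hlast
      obtain ⟨i, hi⟩ := hc w
      rcases Fin.eq_castSucc_or_eq_last i with ⟨j, rfl⟩ | rfl
      · exact hi (hw j)
      · exact hi hlast
    exact hNS (contradiction_core hWc (Subgroup.closure (Set.range α)) β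
      (fun j => Subgroup.subset_closure ⟨j.castSucc, rfl⟩) (α (Fin.last n))
      (Subgroup.subset_closure ⟨Fin.last n, rfl⟩) u₀ v₀ hu₀ hv₀ hdisj)

end CFPAux

theorem common_fixed_point_of_no_free_subsemigroup
    (W : Set ℝ) (hW : W.Nonempty) (hWc : IsClosed W)
    (n : ℕ) (α : Fin n → (W ≃o W))
    (G : Subgroup (W ≃o W)) (hG : G = Subgroup.closure (Set.range α))
    (hNS : ¬∃ f : FreeSemigroup (Fin 2) →ₙ* (W ≃o W),
      Function.Injective f ∧ ∀ s, f s ∈ G)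
    (hfix : ∀ i, ∃ w : W, α i w = w) :
    ∃ w : W, ∀ g ∈ G, g w = w := by
  subst hG
  obtain ⟨w, hw⟩ := CFPAux.main_aux W hW hWc n α hNS hfix
  refine ⟨w, ?_⟩
  intro g hg
  refine Subgroup.closure_induction ?_ ?_ ?_ ?_ hg
  · rintro x ⟨i, rfl⟩
    exact hw i
  · rfl
  · intro x y _ _ px py
    show x (y w) = w
    rw [py, px]
  · intro x _ px
    exact CFPAux.inv_fixed x px
end

section
/- Let G be a group of piecewise linear orientation preserving homeomorphisms of [0,1] with no common fixed point in the open interval (0,1), and let A and B be finitely generated subgroups of the commutator subgroup G'. Then there exists g ∈ G such that gAg⁻¹ and B centralize each other (i.e., every element of gAg⁻¹ commutes with every element of B). -/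
/-- The unit interval `[0,1]` as a subtype of `ℝ`. -/
abbrev UnitInt : Type := Set.Icc (0 : ℝ) 1

/-- An order preserving self-bijection of `[0,1]` is piecewise linear if
there is a finite set of breakpoints away from which it is affine:
on any subinterval `[a,b]` containing no breakpoint in its interior,
`f` is given by `x ↦ p * x + q`. -/
def IsPL (f : UnitInt ≃o UnitInt) : Prop :=
  ∃ s : Finset ℝ, ∀ a b : UnitInt,
    (∀ c ∈ s, ¬((a : ℝ) < c ∧ c < (b : ℝ))) →
    ∃ p q : ℝ, ∀ x : UnitInt, a ≤ x → x ≤ b → ((f x : ℝ)) = p * (x : ℝ) + q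

/-!
Near each endpoint a piecewise linear homeomorphism is linear, and slopes multiply under
composition, so every commutator of `G`, hence every element of a finitely generated subgroup
of `G'`, is the identity on `[0, lo) ∪ (hi, 1]` for some `0 < lo` and `hi < 1`. The infimum of
the `G`-orbit of `hi` is a common fixed point of `G`, so it is `0` and some `g ∈ G` moves `hi`
below `lo`. Then every point is fixed by `g a g⁻¹` (on `[lo, 1]`) or by `b` (on `[0, lo)`),
and permutations with disjoint supports commute.
-/

open Filter Topology MulAction Set
open scoped commutatorElement

section EventuallyFixing

variable {M α : Type*} [Group M] [MulAction M α]

def eventuallyFixingSubgroup (l : Filter α) : Subgroup M where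
  carrier := {m | ∀ᶠ x in l, m • x = x}
  one_mem' := Eventually.of_forall (one_smul M)
  mul_mem' {m n} hm hn := by
    filter_upwards [hm, hn] with x hmx hnx
    rw [mul_smul, hnx, hmx]
  inv_mem' {m} hm := by
    filter_upwards [hm] with x hmx
    rw [inv_smul_eq_iff, hmx]

theorem Subgroup.FG.exists_le_fixingSubgroup {l : Filter α} {A : Subgroup M} (hfg : A.FG)
    (hA : A ≤ eventuallyFixingSubgroup l) : ∃ U ∈ l, A ≤ fixingSubgroup M U := by
  obtain ⟨S, rfl⟩ := hfg
  refine ⟨{x | ∀ m ∈ S, m • x = x},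
    (eventually_all_finset S).2 fun m hm => hA (Subgroup.subset_closure hm), ?_⟩
  rw [Subgroup.closure_le]
  exact fun m hm => (mem_fixingSubgroup_iff M).2 fun x hx => hx m hm

theorem commute_of_forall_smul_eq_or [FaithfulSMul M α] {m n : M}
    (h : ∀ x : α, m • x = x ∨ n • x = x) : Commute m n :=
  toPerm_injective (α := M) (β := α) <| by
    change toPermHom M α (m * n) = toPermHom M α (n * m)
    rw [map_mul, map_mul]
    exact (Equiv.Perm.Disjoint.commute (f := toPermHom M α m) (g := toPermHom M α n) h).eq

end EventuallyFixing

theorem sInf_orbit_mem_fixedPoints {β : Type*} [ConditionallyCompleteLinearOrder β]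
    (G : Subgroup (β ≃o β)) (x : β) (hbdd : BddBelow (orbit G x)) :
    sInf (orbit G x) ∈ fixedPoints G β := by
  intro g
  change (g : β ≃o β) (sInf (orbit G x)) = sInf (orbit G x)
  rw [(g : β ≃o β).map_csInf' ⟨x, mem_orbit_self x⟩ hbdd]
  congr
  exact image_smul.trans (smul_orbit g x)

-- At the endpoints of `[0,1]`, `𝓝 c` is a one-sided neighbourhood filter.
def HasLinearGermAt (f : UnitInt ≃o UnitInt) (c : UnitInt) (p : ℝ) : Prop :=
  ∀ᶠ x in 𝓝 c, (f x : ℝ) = c + p * (x - c)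

namespace HasLinearGermAt

variable {f g : UnitInt ≃o UnitInt} {c : UnitInt} {p q : ℝ}

theorem apply_eq (hf : HasLinearGermAt f c p) : f c = c :=
  Subtype.ext (by simpa using hf.self_of_nhds)

theorem tendsto (hf : HasLinearGermAt f c p) : Tendsto f (𝓝 c) (𝓝 c) := by
  simpa only [hf.apply_eq] using f.continuous.tendsto c

theorem mul (hf : HasLinearGermAt f c p) (hg : HasLinearGermAt g c q) :
    HasLinearGermAt (f * g) c (p * q) := by
  filter_upwards [hg.tendsto.eventually hf, hg] with x hfx hgx
  change (f (g x) : ℝ) = _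
  rw [hfx, hgx]
  ring

theorem inv (hf : HasLinearGermAt f c p) (hp : p ≠ 0) : HasLinearGermAt f⁻¹ c p⁻¹ := by
  have hc : f.symm c = c := f.symm_apply_eq.2 hf.apply_eq.symm
  have : Tendsto f.symm (𝓝 c) (𝓝 c) := by simpa only [hc] using f.symm.continuous.tendsto c
  filter_upwards [this.eventually hf] with x hx
  rw [f.apply_symm_apply] at hx
  change (f.symm x : ℝ) = _
  field_simp
  linarith

theorem commutatorElement_eventually_eq (hf : HasLinearGermAt f c p) (hp : p ≠ 0)
    (hg : HasLinearGermAt g c q) (hq : q ≠ 0) : ∀ᶠ x in 𝓝 c, ⁅f, g⁆ x = x := by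
  filter_upwards [((hf.mul hg).mul (hf.inv hp)).mul (hg.inv hq)] with x hx
  rw [commutatorElement_def]
  ext
  rw [hx]
  field_simp
  ring

end HasLinearGermAt

theorem OrderIso.map_zero_unitInt (f : UnitInt ≃o UnitInt) : f 0 = 0 :=
  f.map_bot' (fun x => x.2.1) (fun y => y.2.1)

theorem OrderIso.map_one_unitInt (f : UnitInt ≃o UnitInt) : f 1 = 1 :=
  f.map_top' (fun x => x.2.2) (fun y => y.2.2)

theorem hasLinearGermAt_of_eq_affine {f : UnitInt ≃o UnitInt} {a b c : UnitInt} {p q : ℝ}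
    (hab : a < b) (hc : Icc a b ∈ 𝓝 c) (hfc : f c = c)
    (haff : ∀ x : UnitInt, a ≤ x → x ≤ b → (f x : ℝ) = p * x + q) :
    p ≠ 0 ∧ HasLinearGermAt f c p := by
  obtain ⟨hac, hcb⟩ := mem_of_mem_nhds hc
  have hfc' := haff c hac hcb
  rw [hfc] at hfc'
  refine ⟨?_, ?_⟩
  · rintro rfl
    have : f a = f b := Subtype.ext (by rw [haff a le_rfl hab.le, haff b hab.le le_rfl]; ring)
    exact hab.ne (f.injective this)
  · filter_upwards [hc] with x hx
    rw [haff x hx.1 hx.2]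
    linarith

theorem Finset.eventually_nhdsGT_forall_notMem_Ioo (s : Finset ℝ) (a : ℝ) :
    ∀ᶠ b in 𝓝[>] a, ∀ c ∈ s, c ∉ Set.Ioo a b := by
  rw [eventually_all_finset]
  intro c _
  by_cases hac : a < c
  · filter_upwards [Ioc_mem_nhdsGT hac] with b hb h using h.2.not_ge hb.2
  · exact Eventually.of_forall fun b h => hac h.1

theorem Finset.eventually_nhdsLT_forall_notMem_Ioo (s : Finset ℝ) (b : ℝ) :
    ∀ᶠ a in 𝓝[<] b, ∀ c ∈ s, c ∉ Set.Ioo a b := by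
  rw [eventually_all_finset]
  intro c _
  by_cases hcb : c < b
  · filter_upwards [Ico_mem_nhdsLT hcb] with a ha h using h.1.not_ge ha.1
  · exact Eventually.of_forall fun a h => hcb h.2

namespace IsPL

variable {f g : UnitInt ≃o UnitInt}

theorem exists_hasLinearGermAt_zero (hf : IsPL f) : ∃ p ≠ 0, HasLinearGermAt f 0 p := by
  obtain ⟨s, hs⟩ := hf
  obtain ⟨b, hbs, hb0, hb1⟩ :=
    ((s.eventually_nhdsGT_forall_notMem_Ioo 0).and (Ioc_mem_nhdsGT one_pos)).exists
  let b' : UnitInt := ⟨b, hb0.le, hb1⟩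
  have hb' : 0 < b' := hb0
  obtain ⟨p, q, hpq⟩ := hs 0 b' hbs
  exact ⟨p, hasLinearGermAt_of_eq_affine hb'
    (mem_of_superset (Iio_mem_nhds hb') fun x hx => ⟨x.2.1, hx.le⟩) f.map_zero_unitInt hpq⟩

theorem exists_hasLinearGermAt_one (hf : IsPL f) : ∃ p ≠ 0, HasLinearGermAt f 1 p := by
  obtain ⟨s, hs⟩ := hf
  obtain ⟨a, has, ha0, ha1⟩ :=
    ((s.eventually_nhdsLT_forall_notMem_Ioo 1).and (Ico_mem_nhdsLT zero_lt_one)).exists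
  let a' : UnitInt := ⟨a, ha0, ha1.le⟩
  have ha' : a' < 1 := ha1
  obtain ⟨p, q, hpq⟩ := hs a' 1 has
  exact ⟨p, hasLinearGermAt_of_eq_affine ha'
    (mem_of_superset (Ioi_mem_nhds ha') fun x hx => ⟨hx.le, x.2.2⟩) f.map_one_unitInt hpq⟩

theorem commutatorElement_mem (hf : IsPL f) (hg : IsPL g) :
    ⁅f, g⁆ ∈ eventuallyFixingSubgroup (𝓝 (0 : UnitInt) ⊔ 𝓝 1) := by
  obtain ⟨p₀, hp₀, hf₀⟩ := hf.exists_hasLinearGermAt_zero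
  obtain ⟨q₀, hq₀, hg₀⟩ := hg.exists_hasLinearGermAt_zero
  obtain ⟨p₁, hp₁, hf₁⟩ := hf.exists_hasLinearGermAt_one
  obtain ⟨q₁, hq₁, hg₁⟩ := hg.exists_hasLinearGermAt_one
  exact eventually_sup.2 ⟨hf₀.commutatorElement_eventually_eq hp₀ hg₀ hq₀,
    hf₁.commutatorElement_eventually_eq hp₁ hg₁ hq₁⟩

end IsPL

theorem commutator_le_eventuallyFixingSubgroup {G : Subgroup (UnitInt ≃o UnitInt)}
    (hPL : ∀ g ∈ G, IsPL g) : ⁅G, G⁆ ≤ eventuallyFixingSubgroup (𝓝 (0 : UnitInt) ⊔ 𝓝 1) :=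
  Subgroup.commutator_le.2 fun f hf g hg => IsPL.commutatorElement_mem (hPL f hf) (hPL g hg)

theorem exists_Iio_union_Ioi_subset {U : Set UnitInt} (hU : U ∈ 𝓝 0 ⊔ 𝓝 1) :
    ∃ lo hi : UnitInt, 0 < lo ∧ hi < 1 ∧ Iio lo ∪ Ioi hi ⊆ U := by
  obtain ⟨lo, hlo, hloU⟩ := exists_Ico_subset_of_mem_nhds (mem_sup.1 hU).1 ⟨1, zero_lt_one⟩
  obtain ⟨hi, hhi, hhiU⟩ := exists_Ioc_subset_of_mem_nhds (mem_sup.1 hU).2 ⟨0, zero_lt_one⟩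
  exact ⟨lo, hi, hlo, hhi,
    union_subset (fun x hx => hloU ⟨x.2.1, hx⟩) fun x hx => hhiU ⟨hx, x.2.2⟩⟩

theorem exists_apply_lt_of_forall_exists_apply_ne {G : Subgroup (UnitInt ≃o UnitInt)}
    (hnofix : ∀ x : UnitInt, 0 < (x : ℝ) → (x : ℝ) < 1 → ∃ g ∈ G, g x ≠ x)
    {lo hi : UnitInt} (hlo : 0 < lo) (hhi : hi < 1) : ∃ g ∈ G, g hi < lo := by
  set c := sInf (orbit G hi)
  have hc : c = 0 := by
    by_contra hc0
    have hc_lt : c < 1 := (csInf_le (OrderBot.bddBelow _) (mem_orbit_self hi)).trans_lt hhi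
    obtain ⟨g, hg, hgc⟩ := hnofix c (lt_of_le_of_ne c.2.1 (Subtype.coe_ne_coe.2 hc0).symm) hc_lt
    exact hgc (sInf_orbit_mem_fixedPoints G hi (OrderBot.bddBelow _) ⟨g, hg⟩)
  obtain ⟨_, ⟨g, rfl⟩, hg⟩ := exists_lt_of_csInf_lt ⟨hi, mem_orbit_self hi⟩ (hc ▸ hlo)
  exact ⟨g, g.2, hg⟩

theorem commuting_conjugates_in_PL
    (G : Subgroup (UnitInt ≃o UnitInt)) (hPL : ∀ g ∈ G, IsPL g)
    (hnofix : ∀ x : UnitInt, 0 < (x : ℝ) → (x : ℝ) < 1 → ∃ g ∈ G, g x ≠ x)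
    (A B : Subgroup (UnitInt ≃o UnitInt))
    (hA : A ≤ ⁅G, G⁆) (hB : B ≤ ⁅G, G⁆) (hAfg : A.FG) (hBfg : B.FG) :
    ∃ g ∈ G, ∀ a ∈ A, ∀ b ∈ B, (g * a * g⁻¹) * b = b * (g * a * g⁻¹) := by
  have hG := commutator_le_eventuallyFixingSubgroup hPL
  obtain ⟨UA, hUA, hAU⟩ := hAfg.exists_le_fixingSubgroup (hA.trans hG)
  obtain ⟨UB, hUB, hBU⟩ := hBfg.exists_le_fixingSubgroup (hB.trans hG)
  obtain ⟨lo, hi, hlo, hhi, hU⟩ := exists_Iio_union_Ioi_subset (inter_mem hUA hUB)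
  obtain ⟨g, hg, hghi⟩ := exists_apply_lt_of_forall_exists_apply_ne hnofix hlo hhi
  refine ⟨g, hg, fun a ha b hb => (commute_of_forall_smul_eq_or fun x : UnitInt => ?_).eq⟩
  rcases lt_or_ge x lo with hx | hx
  · exact Or.inr ((mem_fixingSubgroup_iff _).1 (hBU hb) x (hU (Or.inl hx)).2)
  · have hx' : hi < g⁻¹ • x := g.lt_symm_apply.2 (hghi.trans_le hx)
    have ha' := (mem_fixingSubgroup_iff _).1 (hAU ha) _ (hU (Or.inr hx')).1
    exact Or.inl (by rw [mul_smul, mul_smul, ha', smul_inv_smul])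
end

section
/- The group of piecewise linear orientation preserving homeomorphisms of [0,1] contains no nonabelian free subgroup. -/
/-!
At a point fixed by the whole group, the one-sided slope of a PL homeomorphism is a
homomorphism to `ℝ`, so an element of the commutator subgroup is the identity near both ends
of every orbital; by piecewise linearity its support meets only finitely many orbitals. The
group moves any point of an orbital arbitrarily close to the right end, so for `x, y` in the
commutator subgroup and an orbital moved by `y` some conjugate `g x g⁻¹` has support disjoint
from that of `y` inside this orbital, and `⁅g x g⁻¹, y⁆` moves fewer orbitals than `y`. Taking
`y ≠ 1` in `⁅H, H⁆` with the fewest moved orbitals, where `H` is the normal closure of `x`, some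
conjugate of `x` commutes with `y`.

In a free group this cannot happen for `x ≠ 1`: commuting elements of the free group `H` are
powers of a common element and the abelianization of `H` is torsion free, which would put `x`
into `⁅H, H⁆`; but a nontrivial free group is not perfect. In the free group on `a, b` one
takes `x = ⁅a, b⁆`, and `⁅x, a x a⁻¹⁆` is a nontrivial element of `⁅H, H⁆`.
-/

open scoped commutatorElement
open Subgroup

theorem FreeGroup.not_commute_of_ne {ι : Type*} {i j : ι} (hij : i ≠ j) :
    ¬Commute (of i) (of j) := by
  classical
  intro h
  have hmap := congrArg (FreeGroup.lift fun k => if k = i then of (0 : Fin 2) else of 1) h.eq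
  simp only [_root_.map_mul, lift_apply_of, ↓reduceIte, hij.symm] at hmap
  exact absurd hmap (by decide)

theorem Subgroup.coe_mem_commutator_iff {G : Type*} [Group G] {H : Subgroup G} {a : H} :
    (a : G) ∈ ⁅H, H⁆ ↔ a ∈ _root_.commutator H := by
  rw [← H.map_subtype_commutator]
  exact mem_map_iff_mem H.subtype_injective

namespace IsFreeGroup

variable {G : Type*} [Group G] [IsFreeGroup G]

theorem commutator_ne_top [Nontrivial G] : commutator G ≠ ⊤ := by
  obtain ⟨i⟩ : Nonempty (Generators G) := by
    by_contra h
    rw [not_nonempty_iff] at h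
    exact not_subsingleton G (toFreeGroup G).injective.subsingleton
  intro htop
  have hi : of i ∈ (lift fun _ => Multiplicative.ofAdd (1 : ℤ) : G →* Multiplicative ℤ).ker :=
    Abelianization.commutator_subset_ker _ (htop ▸ mem_top _)
  simp [MonoidHom.mem_ker, lift_of] at hi

theorem isCyclic_of_isMulCommutative [IsMulCommutative G] : IsCyclic G := by
  have : Subsingleton (Generators G) := ⟨fun i j => by
    by_contra hij
    refine FreeGroup.not_commute_of_ne hij ?_
    simpa [Commute, SemiconjBy, of] using congrArg (toFreeGroup G) (mul_comm' (of i : G) (of j))⟩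
  have : IsCyclic (FreeGroup (Generators G)) := by
    cases isEmpty_or_nonempty (Generators G)
    · exact isCyclic_of_subsingleton
    · have := uniqueOfSubsingleton (Classical.arbitrary (Generators G))
      infer_instance
  exact isCyclic_of_surjective (toFreeGroup G).symm (toFreeGroup G).symm.surjective

theorem exists_zpow_eq_of_commute {a b : G} (h : Commute a b) :
    ∃ w : G, a ∈ zpowers w ∧ b ∈ zpowers w := by
  have : IsMulCommutative (Subgroup.closure {a, b}) := isMulCommutative_closure (by
    rintro _ (rfl | rfl) _ (rfl | rfl) <;> first | rfl | exact h.eq | exact h.symm.eq)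
  have := isCyclic_of_isMulCommutative (G := Subgroup.closure {a, b})
  obtain ⟨w, hw⟩ := IsCyclic.exists_generator (α := Subgroup.closure {a, b})
  obtain ⟨m, hm⟩ := hw ⟨a, subset_closure (by simp)⟩
  obtain ⟨n, hn⟩ := hw ⟨b, subset_closure (by simp)⟩
  exact ⟨w, ⟨m, congrArg Subtype.val hm⟩, ⟨n, congrArg Subtype.val hn⟩⟩

instance : IsMulTorsionFree (Abelianization G) :=
  let e : Abelianization G ≃* Multiplicative (Generators G →₀ ℤ) :=
    (toFreeGroup G).abelianizationCongr.trans
      (FreeAbelianGroup.equivFinsupp (Generators G)).toMultiplicative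
  e.injective.isMulTorsionFree e.toMonoidHom

theorem mem_commutator_of_zpow_mem {a : G} {n : ℤ} (hn : n ≠ 0) (h : a ^ n ∈ commutator G) :
    a ∈ commutator G := by
  rw [← Abelianization.ker_of, MonoidHom.mem_ker] at h ⊢
  rwa [map_zpow, IsMulTorsionFree.zpow_eq_one_iff_left hn] at h

theorem notMem_commutator_normalClosure {x : G} (hx : x ≠ 1) :
    x ∉ ⁅normalClosure {x}, normalClosure {x}⁆ := by
  set H := normalClosure ({x} : Set G)
  intro hxH'
  have hle : H ≤ ⁅H, H⁆ := normalClosure_le_normal (Set.singleton_subset_iff.2 hxH')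
  have : Nontrivial H :=
    ⟨⟨⟨x, subset_normalClosure (Set.mem_singleton x)⟩, 1, fun h => hx congr(Subtype.val $h)⟩⟩
  exact commutator_ne_top (G := H) (eq_top_iff.2 fun a _ => coe_mem_commutator_iff.1 (hle a.2))

theorem not_commute_conj_of_mem_commutator_normalClosure {x y : G} (hx : x ≠ 1)
    (hy : y ∈ ⁅normalClosure {x}, normalClosure {x}⁆) (hy1 : y ≠ 1) (g : G) :
    ¬Commute (g * x * g⁻¹) y := by
  set H := normalClosure ({x} : Set G)
  intro hcomm
  let u : H :=
    ⟨g * x * g⁻¹, normalClosure_normal.conj_mem x (subset_normalClosure (Set.mem_singleton x)) g⟩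
  let v : H := ⟨y, H.commutator_le_self hy⟩
  obtain ⟨w, ⟨m, hm⟩, ⟨n, hn⟩⟩ :=
    exists_zpow_eq_of_commute (a := u) (b := v) (Subtype.ext hcomm.eq)
  have hm : w ^ m = u := hm
  have hn : w ^ n = v := hn
  have hn0 : n ≠ 0 := by
    rintro rfl
    exact hy1 congr(Subtype.val $(hn.symm.trans (zpow_zero w)))
  have hw : w ∈ commutator H :=
    mem_commutator_of_zpow_mem hn0 (hn ▸ coe_mem_commutator_iff.1 hy)
  have hu : (u : G) ∈ ⁅H, H⁆ := coe_mem_commutator_iff.2 (hm ▸ zpow_mem hw m)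
  apply notMem_commutator_normalClosure hx
  simpa [u, mul_assoc] using (commutator_normal H H).conj_mem _ hu g⁻¹

end IsFreeGroup

theorem MulAction.commutatorElement_smul_eq_self {H α : Type*} [Group H] [MulAction H α]
    {a b : H} {O : Set α} (haO : ∀ s ∈ O, a⁻¹ • s ∈ O) (hbO : ∀ s ∈ O, b⁻¹ • s ∈ O)
    (hdisj : ∀ s ∈ O, a • s = s ∨ b • s = s) {t : α} (ht : t ∈ O) : ⁅a, b⁆ • t = t := by
  rw [commutatorElement_def, mul_smul, mul_smul, mul_smul]
  by_cases hb : b⁻¹ • t = t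
  · have hbt : b • t = t := by rwa [inv_smul_eq_iff, eq_comm] at hb
    rw [hb]
    rcases hdisj _ (haO t ht) with ha | ha
    · rw [smul_inv_smul] at ha
      rw [← ha, hbt]
      exact eq_inv_smul_iff.mp ha
    · rw [ha, smul_inv_smul]
  · have ha : a • b⁻¹ • t = b⁻¹ • t :=
      (hdisj _ (hbO t ht)).resolve_right (by rw [smul_inv_smul]; exact fun h => hb h.symm)
    have hat : a • t = t := (hdisj t ht).resolve_right fun h => hb (by rw [inv_smul_eq_iff, h])
    rw [inv_smul_eq_iff.2 ha.symm, smul_inv_smul, hat]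

section Orbitals

variable {G X : Type*} [Group G] [CompleteLinearOrder X] (ρ : G →* X ≃o X)

def commonFixedPoints : Set X := {x | ∀ g, ρ g x = x}

def fixedFloor (t : X) : X := sSup {s ∈ commonFixedPoints ρ | s ≤ t}

def fixedCeil (t : X) : X := sInf {s ∈ commonFixedPoints ρ | t ≤ s}

/-- For `t` moved by some element of `G`, the orbital of `t` is the component of the
complement of `commonFixedPoints ρ` containing `t`; it is empty otherwise. -/
def orbital (t : X) : Set X := Set.Ioo (fixedFloor ρ t) (fixedCeil ρ t)

def movedOrbitals (g : G) : Set (Set X) := orbital ρ '' {t | ρ g t ≠ t}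

variable {ρ}

theorem sSup_mem_commonFixedPoints {S : Set X} (hS : S ⊆ commonFixedPoints ρ) :
    sSup S ∈ commonFixedPoints ρ := fun g => by
  rw [OrderIso.map_sSup, sSup_eq_iSup]
  exact iSup_congr fun s => iSup_congr fun hs => hS hs g

theorem sInf_mem_commonFixedPoints {S : Set X} (hS : S ⊆ commonFixedPoints ρ) :
    sInf S ∈ commonFixedPoints ρ := fun g => by
  rw [OrderIso.map_sInf, sInf_eq_iInf]
  exact iInf_congr fun s => iInf_congr fun hs => hS hs g

theorem fixedFloor_mem (t : X) : fixedFloor ρ t ∈ commonFixedPoints ρ :=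
  sSup_mem_commonFixedPoints fun _ hs => hs.1

theorem fixedCeil_mem (t : X) : fixedCeil ρ t ∈ commonFixedPoints ρ :=
  sInf_mem_commonFixedPoints fun _ hs => hs.1

theorem le_fixedFloor {s t : X} (hs : s ∈ commonFixedPoints ρ) (hst : s ≤ t) :
    s ≤ fixedFloor ρ t :=
  le_sSup ⟨hs, hst⟩

theorem fixedCeil_le {s t : X} (hs : s ∈ commonFixedPoints ρ) (hts : t ≤ s) :
    fixedCeil ρ t ≤ s :=
  sInf_le ⟨hs, hts⟩

theorem fixedFloor_le (t : X) : fixedFloor ρ t ≤ t := sSup_le fun _ hs => hs.2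

theorem le_fixedCeil (t : X) : t ≤ fixedCeil ρ t := le_sInf fun _ hs => hs.2

theorem mem_orbital_self {t : X} (ht : t ∉ commonFixedPoints ρ) : t ∈ orbital ρ t :=
  ⟨(fixedFloor_le t).lt_of_ne fun h => ht (h ▸ fixedFloor_mem t),
    (le_fixedCeil t).lt_of_ne' fun h => ht (h ▸ fixedCeil_mem t)⟩

theorem notMem_commonFixedPoints_of_mem_orbital {s t : X} (hs : s ∈ orbital ρ t) :
    s ∉ commonFixedPoints ρ := fun hfix => by
  rcases le_total s t with hst | hts
  · exact (le_fixedFloor hfix hst).not_gt hs.1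
  · exact (fixedCeil_le hfix hts).not_gt hs.2

theorem orbital_eq_of_mem {s t : X} (hs : s ∈ orbital ρ t) : orbital ρ s = orbital ρ t := by
  have hfloor : fixedFloor ρ s = fixedFloor ρ t := by
    refine le_antisymm (le_fixedFloor (fixedFloor_mem s) ?_)
      (le_fixedFloor (fixedFloor_mem t) hs.1.le)
    by_contra! hlt
    exact ((fixedCeil_le (fixedFloor_mem s) hlt.le).trans (fixedFloor_le s)).not_gt hs.2
  have hceil : fixedCeil ρ s = fixedCeil ρ t := by
    refine le_antisymm (fixedCeil_le (fixedCeil_mem t) hs.2.le)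
      (fixedCeil_le (fixedCeil_mem s) ?_)
    by_contra! hlt
    exact ((le_fixedCeil s).trans (le_fixedFloor (fixedCeil_mem s) hlt.le)).not_gt hs.1
  rw [orbital, orbital, hfloor, hceil]

theorem apply_mem_orbital {s t : X} (hs : s ∈ orbital ρ t) (g : G) : ρ g s ∈ orbital ρ t := by
  constructor
  · simpa only [fixedFloor_mem t g] using (ρ g).strictMono hs.1
  · simpa only [fixedCeil_mem t g] using (ρ g).strictMono hs.2

theorem iSup_apply_mem_commonFixedPoints (s : X) : ⨆ g, ρ g s ∈ commonFixedPoints ρ :=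
    fun h => by
  rw [OrderIso.map_iSup]
  simp_rw [← RelIso.mul_apply, ← map_mul]
  exact (Equiv.mulLeft h).iSup_comp (g := fun g => ρ g s)

theorem exists_lt_apply {s t β : X} (hs : s ∈ orbital ρ t) (hβ : β < fixedCeil ρ t) :
    ∃ g, β < ρ g s := by
  have hceil : fixedCeil ρ t ≤ ⨆ g, ρ g s := by
    by_contra! hlt
    have hs_le : s ≤ ⨆ g, ρ g s := le_iSup_of_le 1 (by simp)
    exact notMem_commonFixedPoints_of_mem_orbital ⟨hs.1.trans_le hs_le, hlt⟩
      (iSup_apply_mem_commonFixedPoints s)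
  exact lt_iSup_iff.1 (hβ.trans_le hceil)

theorem movedOrbitals_commutatorElement_subset (a b : G) :
    movedOrbitals ρ ⁅a, b⁆ ⊆ orbital ρ '' {r | ρ a r ≠ r ∧ ρ b r ≠ r} := by
  rintro _ ⟨s, hs, rfl⟩
  by_contra hcon
  have hinv (g : G) (r : X) (hr : r ∈ orbital ρ s) : (ρ g)⁻¹ • r ∈ orbital ρ s := by
    rw [RelIso.smul_def, ← map_inv]
    exact apply_mem_orbital hr _
  refine hs ?_
  rw [map_commutatorElement]
  refine MulAction.commutatorElement_smul_eq_self (hinv a) (hinv b) (fun r hr => ?_)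
    (mem_orbital_self fun h => hs (h _))
  by_contra! h
  exact hcon ⟨r, h, orbital_eq_of_mem hr⟩

end Orbitals

section PiecewiseLinear

open unitInterval

def HasRightSlope (f : UnitInt ≃o UnitInt) (c : UnitInt) (p : ℝ) : Prop :=
  ∃ d > c, ∀ t ∈ Set.Icc c d, (f t : ℝ) = c + p * (t - c)

namespace HasRightSlope

variable {f g : UnitInt ≃o UnitInt} {c : UnitInt} {p q : ℝ}

theorem apply_self (hf : HasRightSlope f c p) : f c = c := by
  obtain ⟨d, hcd, hf⟩ := hf
  exact Subtype.ext (by simpa using hf c ⟨le_rfl, hcd.le⟩)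

theorem unique (hp : HasRightSlope f c p) (hq : HasRightSlope f c q) : p = q := by
  obtain ⟨d, hcd, hp⟩ := hp
  obtain ⟨d', hcd', hq⟩ := hq
  have hpos : (0 : ℝ) < (min d d' : UnitInt) - c := sub_pos.2 (lt_min hcd hcd')
  have := (hp _ ⟨le_min hcd.le hcd'.le, min_le_left _ _⟩).symm.trans
    (hq _ ⟨le_min hcd.le hcd'.le, min_le_right _ _⟩)
  exact mul_right_cancel₀ hpos.ne' (by linarith)

theorem mul (hf : HasRightSlope f c p) (hg : HasRightSlope g c q) :
    HasRightSlope (f * g) c (p * q) := by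
  have hgc := hg.apply_self
  obtain ⟨d, hcd, hf⟩ := hf
  obtain ⟨d', hcd', hg⟩ := hg
  refine ⟨min d' (g.symm d), lt_min hcd' (g.lt_symm_apply.2 (by rwa [hgc])), fun t ht => ?_⟩
  have hgt : g t ∈ Set.Icc c d :=
    ⟨hgc ▸ g.monotone ht.1, g.le_symm_apply.1 (ht.2.trans (min_le_right _ _))⟩
  rw [RelIso.mul_apply, hf _ hgt, hg t ⟨ht.1, ht.2.trans (min_le_left _ _)⟩]
  ring

end HasRightSlope

theorem hasRightSlope_one {c : UnitInt} (hc : (c : ℝ) < 1) : HasRightSlope 1 c 1 :=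
  ⟨1, hc, fun t _ => by simp⟩

theorem apply_eq_of_affine {f : UnitInt ≃o UnitInt} {c d : UnitInt} {p q : ℝ} (hc : f c = c)
    (h : ∀ t : UnitInt, c ≤ t → t ≤ d → (f t : ℝ) = p * t + q) :
    ∀ t ∈ Set.Icc c d, (f t : ℝ) = c + p * (t - c) := by
  intro t ht
  have hq := h c le_rfl (ht.1.trans ht.2)
  rw [hc] at hq
  rw [h t ht.1 ht.2]
  linarith

theorem Finset.exists_gt_forall_notMem_Ioo {α : Type*} [LinearOrder α] (s : Finset α) {c b : α}
    (hcb : c < b) :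
    ∃ d ∈ Set.Ioc c b, ∀ r ∈ s, r ∉ Set.Ioo c d := by
  classical
  set T := insert b (s.filter (c < ·))
  refine ⟨T.min' (insert_nonempty _ _), ⟨?_, T.min'_le _ (mem_insert_self _ _)⟩,
    fun r hr hrd => ?_⟩
  · rw [Finset.lt_min'_iff]
    simp only [T, mem_insert, mem_filter]
    rintro r (rfl | ⟨_, hr⟩) <;> assumption
  · exact (T.min'_le r (by simp [T, hr, hrd.1])).not_gt hrd.2

theorem IsPL.exists_hasRightSlope {f : UnitInt ≃o UnitInt} (hf : IsPL f) {c : UnitInt}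
    (hc : f c = c) (hc1 : (c : ℝ) < 1) : ∃ p, HasRightSlope f c p := by
  obtain ⟨s, hs⟩ := hf
  obtain ⟨d, ⟨hcd, hd1⟩, hd⟩ := s.exists_gt_forall_notMem_Ioo hc1
  obtain ⟨p, q, hpq⟩ := hs c ⟨d, c.2.1.trans hcd.le, hd1⟩ hd
  exact ⟨p, _, hcd, apply_eq_of_affine hc hpq⟩

/-- Conjugation by `t ↦ 1 - t`, which turns statements about right neighbourhoods of a point
into statements about left neighbourhoods. -/
def UnitInt.reflect : (UnitInt ≃o UnitInt) →* (UnitInt ≃o UnitInt) where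
  toFun f :=
    { toFun t := σ (f (σ t))
      invFun t := σ (f.symm (σ t))
      left_inv t := by simp
      right_inv t := by simp
      map_rel_iff' := by simp [symm_le_symm] }
  map_one' := by ext; simp
  map_mul' f g := by ext; simp

theorem IsPL.reflect {f : UnitInt ≃o UnitInt} (hf : IsPL f) : IsPL (UnitInt.reflect f) := by
  obtain ⟨s, hs⟩ := hf
  refine ⟨s.image (1 - ·), fun a b hab => ?_⟩
  obtain ⟨p, q, hpq⟩ := hs (σ b) (σ a) fun r hr ⟨h1, h2⟩ =>
    hab (1 - r) (Finset.mem_image_of_mem _ hr)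
      ⟨by rw [coe_symm_eq] at h2; linarith, by rw [coe_symm_eq] at h1; linarith⟩
  refine ⟨p, 1 - p - q, fun x hax hxb => ?_⟩
  have := hpq (σ x) (symm_le_symm.2 hxb) (symm_le_symm.2 hax)
  simp only [UnitInt.reflect, MonoidHom.coe_mk, OneHom.coe_mk, RelIso.coe_fn_mk, Equiv.coe_fn_mk,
    coe_symm_eq] at this ⊢
  linarith

end PiecewiseLinear

section PLAction

open unitInterval

variable {G : Type*} [Group G] (ρ : G →* UnitInt ≃o UnitInt)

noncomputable def rightSlope {c : UnitInt} (hc1 : (c : ℝ) < 1)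
    (h : ∀ g, ∃ p, HasRightSlope (ρ g) c p) : G →* ℝ where
  toFun g := (h g).choose
  map_one' := (h 1).choose_spec.unique (by rw [map_one]; exact hasRightSlope_one hc1)
  map_mul' a b := (h (a * b)).choose_spec.unique
    (by rw [map_mul]; exact (h a).choose_spec.mul (h b).choose_spec)

variable {ρ} (hPL : ∀ g, IsPL (ρ g))
include hPL

theorem hasRightSlope_one_of_mem_commutator {c : UnitInt} (hc : c ∈ commonFixedPoints ρ)
    (hc1 : (c : ℝ) < 1) {y : G} (hy : y ∈ commutator G) : HasRightSlope (ρ y) c 1 := by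
  have h g : ∃ p, HasRightSlope (ρ g) c p := (hPL g).exists_hasRightSlope (hc g) hc1
  have hy1 : rightSlope ρ hc1 h y = 1 := by
    simpa [Units.ext_iff] using
      Abelianization.commutator_subset_ker (rightSlope ρ hc1 h).toHomUnits hy
  convert (h y).choose_spec
  exact hy1.symm

theorem exists_gt_forall_Icc_apply_eq_self {c : UnitInt} (hc : c ∈ commonFixedPoints ρ)
    (hc1 : (c : ℝ) < 1) {y : G} (hy : y ∈ commutator G) :
    ∃ d > c, ∀ t ∈ Set.Icc c d, ρ y t = t := by
  obtain ⟨d, hcd, hd⟩ := hasRightSlope_one_of_mem_commutator hPL hc hc1 hy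
  exact ⟨d, hcd, fun t ht => Subtype.ext (by rw [hd t ht]; ring)⟩

theorem exists_lt_forall_Icc_apply_eq_self {c : UnitInt} (hc : c ∈ commonFixedPoints ρ)
    (hc0 : 0 < (c : ℝ)) {y : G} (hy : y ∈ commutator G) :
    ∃ d < c, ∀ t ∈ Set.Icc d c, ρ y t = t := by
  have hc' : σ c ∈ commonFixedPoints (UnitInt.reflect.comp ρ) := fun g => by
    simp [UnitInt.reflect, hc g]
  obtain ⟨d, hcd, hd⟩ := exists_gt_forall_Icc_apply_eq_self (ρ := UnitInt.reflect.comp ρ)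
    (fun g => (hPL g).reflect) hc' (by simpa [coe_symm_eq] using hc0) hy
  refine ⟨σ d, symm_lt_comm.1 hcd, fun t ht => ?_⟩
  have := hd (σ t) ⟨symm_le_symm.2 ht.2, symm_le_comm.1 ht.1⟩
  simpa [UnitInt.reflect] using congrArg σ this

theorem exists_forall_mem_orbital_apply_ne_mem_Icc {y : G} (hy : y ∈ commutator G) {t : UnitInt}
    (ht : t ∉ commonFixedPoints ρ) :
    ∃ α ∈ orbital ρ t, ∃ β ∈ orbital ρ t, ∀ s ∈ orbital ρ t, ρ y s ≠ s → s ∈ Set.Icc α β := by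
  have htO := mem_orbital_self ht
  obtain ⟨d₁, hd₁, h₁⟩ := exists_gt_forall_Icc_apply_eq_self hPL (fixedFloor_mem t)
    ((Subtype.coe_lt_coe.2 htO.1).trans_le t.2.2) hy
  obtain ⟨d₂, hd₂, h₂⟩ := exists_lt_forall_Icc_apply_eq_self hPL (fixedCeil_mem t)
    (t.2.1.trans_lt (Subtype.coe_lt_coe.2 htO.2)) hy
  refine ⟨min d₁ t, ⟨lt_min hd₁ htO.1, (min_le_right _ _).trans_lt htO.2⟩,
    max d₂ t, ⟨htO.1.trans_le (le_max_right _ _), max_lt hd₂ htO.2⟩, fun s hs hys => ⟨?_, ?_⟩⟩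
  · by_contra! h
    exact hys (h₁ s ⟨hs.1.le, h.le.trans (min_le_left _ _)⟩)
  · by_contra! h
    exact hys (h₂ s ⟨(le_max_left _ _).trans h.le, hs.2.le⟩)

theorem finite_movedOrbitals {y : G} (hy : y ∈ commutator G) : (movedOrbitals ρ y).Finite := by
  obtain ⟨s, hs⟩ := hPL y
  refine (s.finite_toSet.image fun r => orbital ρ (Set.projIcc 0 1 zero_le_one r)).subset ?_
  rintro _ ⟨t, ht, rfl⟩
  have htO := mem_orbital_self fun h => ht (h y)
  obtain ⟨r, hr, hrO⟩ :
      ∃ r ∈ s, r ∈ Set.Ioo ((fixedFloor ρ t : UnitInt) : ℝ) ((fixedCeil ρ t : UnitInt) : ℝ) := by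
    by_contra! hno
    obtain ⟨p, q, hpq⟩ := hs _ _ hno
    have hlin := apply_eq_of_affine (fixedFloor_mem t y) hpq
    have hp : HasRightSlope (ρ y) (fixedFloor ρ t) p := ⟨_, htO.1.trans htO.2, hlin⟩
    have hp1 : p = 1 := hp.unique (hasRightSlope_one_of_mem_commutator hPL (fixedFloor_mem t)
        ((Subtype.coe_lt_coe.2 htO.1).trans_le t.2.2) hy)
    exact ht (Subtype.ext (by rw [hlin t ⟨htO.1.le, htO.2.le⟩, hp1]; ring))
  have hr01 : r ∈ Set.Icc (0 : ℝ) 1 :=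
    ⟨(fixedFloor ρ t).2.1.trans hrO.1.le, hrO.2.le.trans (fixedCeil ρ t).2.2⟩
  refine ⟨r, hr, ?_⟩
  dsimp only
  rw [Set.projIcc_of_mem _ hr01]
  exact orbital_eq_of_mem (s := (⟨r, hr01⟩ : UnitInt)) hrO

theorem exists_movedOrbitals_commutatorElement_conj_ssubset {x y : G} (hx : x ∈ commutator G)
    (hy : y ∈ commutator G) {t : UnitInt} (ht : ρ y t ≠ t) :
    ∃ g, movedOrbitals ρ ⁅g * x * g⁻¹, y⁆ ⊂ movedOrbitals ρ y := by
  have htF : t ∉ commonFixedPoints ρ := fun h => ht (h y)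
  obtain ⟨αx, hαx, βx, hβx, hx'⟩ := exists_forall_mem_orbital_apply_ne_mem_Icc hPL hx htF
  obtain ⟨αy, hαy, βy, hβy, hy'⟩ := exists_forall_mem_orbital_apply_ne_mem_Icc hPL hy htF
  obtain ⟨g, hg⟩ := exists_lt_apply (s := min αx αy) (β := max βx βy)
    ⟨lt_min hαx.1 hαy.1, (min_le_left _ _).trans_lt hαx.2⟩ (max_lt hβx.2 hβy.2)
  -- `g` pushes the support of `x` in the orbital of `t` beyond the support of `y`
  have hdisj : ∀ s ∈ orbital ρ t, ¬(ρ (g * x * g⁻¹) s ≠ s ∧ ρ y s ≠ s) := by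
    rintro s hs ⟨hxs, hys⟩
    have hgs : ρ g (ρ g⁻¹ s) = s := by
      rw [← RelIso.mul_apply, ← map_mul, mul_inv_cancel, map_one, RelIso.one_apply]
    have hxs' : ρ x (ρ g⁻¹ s) ≠ ρ g⁻¹ s := fun h => hxs (by
      rw [map_mul, map_mul, RelIso.mul_apply, RelIso.mul_apply, h, hgs])
    have hle : ρ g (min αx αy) ≤ s :=
      hgs ▸ (ρ g).monotone ((min_le_left _ _).trans (hx' _ (apply_mem_orbital hs _) hxs').1)
    exact (hg.trans_le hle).not_ge ((hy' s hs hys).2.trans (le_max_right _ _))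
  refine ⟨g, (Set.ssubset_iff_of_subset ?_).2 ⟨orbital ρ t, ⟨t, ht, rfl⟩, fun hmem => ?_⟩⟩
  · exact (movedOrbitals_commutatorElement_subset _ _).trans (Set.image_mono fun r hr => hr.2)
  · obtain ⟨r, hr, hrt⟩ := movedOrbitals_commutatorElement_subset _ _ hmem
    exact hdisj r (hrt ▸ mem_orbital_self fun h => hr.2 (h y)) hr

theorem exists_commute_conj (hρ : Function.Injective ρ) {H : Subgroup G} [H.Normal]
    (hH : H ≤ commutator G) {x : G} (hx : x ∈ H) (hne : ∃ y ∈ ⁅H, H⁆, y ≠ 1) :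
    ∃ y ∈ ⁅H, H⁆, y ≠ 1 ∧ ∃ g, Commute (g * x * g⁻¹) y := by
  obtain ⟨y, ⟨hyH, hy1⟩, hmin⟩ := (measure fun y => (movedOrbitals ρ y).ncard).wf.has_min
    {y | y ∈ ⁅H, H⁆ ∧ y ≠ 1} hne
  have hyG : y ∈ commutator G := hH (H.commutator_le_self hyH)
  obtain ⟨t, ht⟩ : ∃ t, ρ y t ≠ t := by
    by_contra! h
    exact hy1 (hρ (by ext t; simp [h]))
  obtain ⟨g, hg⟩ := exists_movedOrbitals_commutatorElement_conj_ssubset hPL (hH hx) hyG ht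
  refine ⟨y, hyH, hy1, g, commutatorElement_eq_one_iff_commute.1 ?_⟩
  by_contra hz
  refine hmin _ ⟨commutator_mem_commutator (Normal.conj_mem ‹_› x hx g)
    (H.commutator_le_self hyH), hz⟩ ?_
  exact Set.ncard_lt_ncard hg (finite_movedOrbitals hPL hyG)

end PLAction

theorem PL_no_free_subgroup :
    ¬∃ f : FreeGroup (Fin 2) →* (UnitInt ≃o UnitInt),
      Function.Injective f ∧ ∀ w : FreeGroup (Fin 2), IsPL (f w) := by
  rintro ⟨ρ, hρ, hPL⟩
  let a : FreeGroup (Fin 2) := .of 0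
  let b : FreeGroup (Fin 2) := .of 1
  let x := ⁅a, b⁆
  have hxG : x ∈ commutator (FreeGroup (Fin 2)) := by
    rw [_root_.commutator_def]
    exact commutator_mem_commutator (mem_top a) (mem_top b)
  have hxH : x ∈ normalClosure {x} := subset_normalClosure (Set.mem_singleton x)
  obtain ⟨y, hy, hy1, g, hcomm⟩ := exists_commute_conj hPL hρ
    (normalClosure_le_normal (Set.singleton_subset_iff.2 hxG)) hxH
    ⟨⁅x, a * x * a⁻¹⁆, commutator_mem_commutator hxH (normalClosure_normal.conj_mem x hxH a),
      by decide⟩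
  exact IsFreeGroup.not_commute_conj_of_mem_commutator_normalClosure (by decide) hy hy1 g hcomm
end

section
/- Let G be a finite group of orientation preserving homeomorphisms of the circle S¹. Then G is cyclic. -/
/-- The circle `ℝ/ℤ`. -/
abbrev Circle1 : Type := AddCircle (1 : ℝ)

/-- A permutation of the circle is an orientation preserving homeomorphism
if it lifts to an order preserving bijection (equivalently, an increasing
homeomorphism) of `ℝ`. -/
def OrientationPreservingHomeo (f : Equiv.Perm Circle1) : Prop :=
  ∃ F : ℝ ≃o ℝ, ∀ x : ℝ, f (↑x) = ((F x : ℝ) : Circle1)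

/-! Each `φ g` lifts to an increasing homeomorphism `F g` of `ℝ` commuting with integer
translations, and `F g ∘ F h = F (g * h) + c g h` for an integer cocycle `c`. The sum
`ψ = ∑ g, F g` then satisfies `ψ ∘ F h = ψ + ∑ g, c g h` and `ψ (x + m) = ψ x + |G| m`, so
`h ↦ ∑ g, c g h` reduces to a homomorphism `G → ℤ/|G|`. It is injective: if `|G|` divides
`∑ g, c g h = |G| m`, then `ψ ∘ F h = ψ (· + m)`, so `F h` is translation by `m` and `φ h = 1`. -/

theorem Continuous.eq_of_forall_exists_intCast {u : ℝ → ℝ} (hu : Continuous u)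
    (h : ∀ x, ∃ k : ℤ, u x = k) (x y : ℝ) : u x = u y := by
  choose k hk using h
  have hk_cont : Continuous k := by
    rw [Int.isClosedEmbedding_coe_real.continuous_iff]
    exact hu.congr hk
  rw [hk, hk, PreconnectedSpace.constant inferInstance hk_cont]

namespace Circle1

theorem coe_eq_coe_iff_exists_int {a b : ℝ} : (a : Circle1) = b ↔ ∃ k : ℤ, a = b + k := by
  rw [← sub_eq_zero, ← AddCircle.coe_sub, AddCircle.coe_eq_zero_iff]
  simp [eq_comm, sub_eq_iff_eq_add']

theorem exists_int_forall_eq_add_of_coe_eq {u v : ℝ → ℝ} (hu : Continuous u) (hv : Continuous v)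
    (h : ∀ x, (u x : Circle1) = v x) : ∃ k : ℤ, ∀ x, u x = v x + k := by
  have hint : ∀ x, ∃ k : ℤ, u x - v x = k := fun x ↦ by
    obtain ⟨k, hk⟩ := coe_eq_coe_iff_exists_int.mp (h x)
    exact ⟨k, by rw [hk]; ring⟩
  obtain ⟨k, hk⟩ := hint 0
  refine ⟨k, fun x ↦ ?_⟩
  linarith [(hu.sub hv).eq_of_forall_exists_intCast (u := fun x ↦ u x - v x) hint x 0]

theorem lift_add_one {f : Equiv.Perm Circle1} {F : ℝ ≃o ℝ} (hF : ∀ x : ℝ, f x = F x) (x : ℝ) :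
    F (x + 1) = F x + 1 := by
  obtain ⟨k, hk⟩ : ∃ k : ℤ, ∀ x, F (x + 1) = F x + k :=
    exists_int_forall_eq_add_of_coe_eq (by fun_prop) F.continuous
      (fun x ↦ by rw [← hF, ← hF, AddCircle.coe_add_period])
  suffices k = 1 by rw [hk, this, Int.cast_one]
  have hk_pos : 0 < k := by
    have := F.strictMono (lt_add_one 0)
    rw [hk] at this
    exact_mod_cast (lt_add_iff_pos_right _).mp this
  by_contra hk_ne
  have hk_two : (2 : ℝ) ≤ k := by exact_mod_cast (show 2 ≤ k by omega)
  -- if `k ≥ 2`, then `y := F⁻¹ (F 0 + 1)` lies strictly between `0` and `1`,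
  -- yet `f` maps it to the same point as `0`
  set y := F.symm (F 0 + 1)
  have hy_pos : 0 < y := by rw [← F.lt_iff_lt, F.apply_symm_apply]; linarith
  have hy_lt : y < 1 := by rw [← F.lt_iff_lt, F.apply_symm_apply, ← zero_add 1, hk 0]; linarith
  have : (y : Circle1) = (0 : ℝ) := f.injective <| by
    rw [hF, hF, F.apply_symm_apply, AddCircle.coe_add_period]
  obtain ⟨j, hj⟩ := coe_eq_coe_iff_exists_int.mp this
  rw [zero_add] at hj
  rw [hj] at hy_pos hy_lt
  have : (0 : ℤ) < j := by exact_mod_cast hy_pos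
  have : j < (1 : ℤ) := by exact_mod_cast hy_lt
  omega

theorem lift_add_int {f : Equiv.Perm Circle1} {F : ℝ ≃o ℝ} (hF : ∀ x : ℝ, f x = F x) (x : ℝ)
    (m : ℤ) : F (x + m) = F x + m :=
  (CircleDeg1Lift.mk ⟨F, F.monotone⟩ (lift_add_one hF)).map_add_int x m

theorem exists_int_lift_mul {f g : Equiv.Perm Circle1} {F G H : ℝ ≃o ℝ}
    (hF : ∀ x : ℝ, f x = F x) (hG : ∀ x : ℝ, g x = G x) (hH : ∀ x : ℝ, (f * g) x = H x) :
    ∃ c : ℤ, ∀ x, F (G x) = H x + c :=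
  exists_int_forall_eq_add_of_coe_eq (by fun_prop) H.continuous
    (fun x ↦ by rw [← hF, ← hG, ← hH, Equiv.Perm.mul_apply])

end Circle1

section Transfer

variable {G : Type*} [Fintype G] {F : G → ℝ → ℝ} {c : G → G → ℤ}

def liftSum (F : G → ℝ → ℝ) (x : ℝ) : ℝ := ∑ g, F g x

theorem liftSum_add_int (hadd : ∀ g x (m : ℤ), F g (x + m) = F g x + m) (x : ℝ) (m : ℤ) :
    liftSum F (x + m) = liftSum F x + Fintype.card G * m := by
  simp [liftSum, hadd, Finset.sum_add_distrib]

theorem strictMono_liftSum [Nonempty G] (hF : ∀ g, StrictMono (F g)) : StrictMono (liftSum F) :=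
  fun _ _ hxy ↦ Finset.sum_lt_sum_of_nonempty Finset.univ_nonempty fun g _ ↦ hF g hxy

variable [Group G]

theorem liftSum_comp (hc : ∀ g h x, F g (F h x) = F (g * h) x + c g h) (h : G) (x : ℝ) :
    liftSum F (F h x) = liftSum F x + ∑ g, c g h := by
  have hshift : ∑ g, F (g * h) x = ∑ g, F g x :=
    Fintype.sum_equiv (Equiv.mulRight h) _ _ (fun _ ↦ rfl)
  simp only [liftSum, hc, Finset.sum_add_distrib, hshift, Int.cast_sum]

theorem sum_cocycle_mul (hadd : ∀ g x (m : ℤ), F g (x + m) = F g x + m)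
    (hc : ∀ g h x, F g (F h x) = F (g * h) x + c g h) (h₁ h₂ : G) :
    ∑ g, c g (h₁ * h₂) + Fintype.card G * c h₁ h₂ = ∑ g, c g h₁ + ∑ g, c g h₂ := by
  have hψ := liftSum_comp hc h₁ (F h₂ 0)
  rw [liftSum_comp hc h₂, hc, liftSum_add_int hadd, liftSum_comp hc] at hψ
  have : ((∑ g, c g (h₁ * h₂) + Fintype.card G * c h₁ h₂ : ℤ) : ℝ)
      = ((∑ g, c g h₁ + ∑ g, c g h₂ : ℤ) : ℝ) := by
    push_cast at hψ ⊢
    linarith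
  exact_mod_cast this

def transferHom (hadd : ∀ g x (m : ℤ), F g (x + m) = F g x + m)
    (hc : ∀ g h x, F g (F h x) = F (g * h) x + c g h) :
    G →* Multiplicative (ZMod (Fintype.card G)) :=
  MonoidHom.mk' (fun h ↦ .ofAdd (∑ g, c g h : ℤ)) fun h₁ h₂ ↦ by
    rw [← ofAdd_add, ← Int.cast_add, ← sum_cocycle_mul hadd hc]
    simp

theorem exists_eq_add_int_of_transferHom_eq_one (hF : ∀ g, StrictMono (F g))
    (hadd : ∀ g x (m : ℤ), F g (x + m) = F g x + m)
    (hc : ∀ g h x, F g (F h x) = F (g * h) x + c g h) {h : G} (h1 : transferHom hadd hc h = 1) :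
    ∃ m : ℤ, ∀ x, F h x = x + m := by
  obtain ⟨m, hm⟩ := (ZMod.intCast_zmod_eq_zero_iff_dvd _ _).mp (congrArg Multiplicative.toAdd h1)
  refine ⟨m, fun x ↦ (strictMono_liftSum hF).injective ?_⟩
  rw [liftSum_comp hc, liftSum_add_int hadd, hm]
  push_cast
  rfl

end Transfer

theorem finite_orientation_preserving_circle_group_is_cyclic
    (G : Type*) [Group G] [Finite G]
    (φ : G →* Equiv.Perm Circle1) (hinj : Function.Injective φ)
    (hor : ∀ g : G, OrientationPreservingHomeo (φ g)) :
    IsCyclic G := by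
  have := Fintype.ofFinite G
  choose F hF using hor
  choose c hc using fun g h ↦ Circle1.exists_int_lift_mul (hF g) (hF h) (by simpa using hF (g * h))
  refine isCyclic_of_injective (transferHom (fun g ↦ Circle1.lift_add_int (hF g)) hc)
    ((injective_iff_map_eq_one _).mpr fun h h1 ↦ hinj ?_)
  obtain ⟨m, hm⟩ := exists_eq_add_int_of_transferHom_eq_one (fun g ↦ (F g).strictMono) _ hc h1
  ext y
  induction y using QuotientAddGroup.induction_on with
  | H x =>
    rw [hF, hm, map_one, Equiv.Perm.one_apply, Circle1.coe_eq_coe_iff_exists_int]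
    exact ⟨m, rfl⟩
end
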